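/- arXiv:2203.06065 — 4 statements merged into one kernel-verified Lean document; each statement's English description precedes it below -/
import Mathlib

section
/- (Lemma 2, part 1: regret bound of the virtual-queue algorithm.) Let x* ∈ X₀ be any fixed point satisfying g_i(x*) ≤ 0 for all i = 1,…,m. Let η > 0 be arbitrary. If the algorithm parameter satisfies α ≥ (1/2)(γ²β² + η), then for all T ≥ 1 the iterates x(1),…,x(T) of the virtual-queue online algorithm satisfy Σ_{t=1}^T f^t(x(t)) ≤ Σ_{t=1}^T f^t(x*) + α‖x* − x(1)‖² + T/(2η). -/
/-!
Drift-plus-penalty argument. Let `L(t) = ½‖Q(t)‖² − ½‖g̃(x(t))‖²`. Since `Q(t) ≥ |g̃(x(t))|`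
coordinatewise for `t ≥ 1`, `L(1) = 0 ≤ L(t)`, and one step of the queue recursion gives
`L(t+1) − L(t) ≤ ⟨Q(t) + g̃(x(t)), g̃(x(t+1))⟩ + ½‖g̃(x(t+1)) − g̃(x(t))‖²`.
The update minimizes a `2α`-strongly convex function over `X₀`, so comparing its value with the
value at `x*` gains `α‖x* − x(t+1)‖²`. Together with convexity of `f^t`, feasibility of `x*`
(the queue term at `x*` is nonpositive), the Lipschitz bound on `g̃` and Young's inequality
`⟨∇f^t, v⟩ ≤ 1/(2η) + (η/2)‖v‖²`, the choice of `α` absorbs every `‖x(t+1) − x(t)‖²` term and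
leaves `f^t(x(t)) + Φ(t+1) − Φ(t) ≤ f^t(x*) + 1/(2η)` for `Φ(t) = α‖x* − x(t)‖² + L(t)`, which
telescopes.
-/

open RealInnerProductSpace Finset Filter Topology

section Convexity

variable {E : Type*} [NormedAddCommGroup E] [InnerProductSpace ℝ E] {s : Set E}

theorem ConvexOn.add_inner_sub_le_of_hasGradientAt [CompleteSpace E] {f : E → ℝ} {d a b : E}
    (hf : ConvexOn ℝ s f) (ha : a ∈ s) (hb : b ∈ s) (hd : HasGradientAt f d a) :
    f a + ⟪d, b - a⟫ ≤ f b := by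
  set ℓ : ℝ →ᵃ[ℝ] E := AffineMap.lineMap a b
  have hderiv : HasDerivAt (f ∘ ℓ) ⟪d, b - a⟫ 0 := by
    have hd' : HasFDerivAt f (InnerProductSpace.toDual ℝ E d) (ℓ 0) := by
      simpa [ℓ] using hd.hasFDerivAt
    simpa using hd'.comp_hasDerivAt (0 : ℝ) AffineMap.hasDerivAt_lineMap
  have := (hf.comp_affineMap ℓ).le_slope_of_hasDerivAt (by simpa [ℓ] using ha)
    (by simpa [ℓ] using hb) zero_lt_one hderiv
  simp only [slope_def_field, Function.comp_apply, AffineMap.lineMap_apply_one,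
    AffineMap.lineMap_apply_zero, sub_zero, div_one, ℓ] at this
  linarith

theorem StrongConvexOn.add_sq_norm_sub_le_of_isMinOn {m : ℝ} {f : E → ℝ} {u z : E}
    (hf : StrongConvexOn s m f) (hmin : IsMinOn f s u) (hu : u ∈ s) (hz : z ∈ s) :
    f u + m / 2 * ‖z - u‖ ^ 2 ≤ f z := by
  have hsegment : ∀ l ∈ Set.Ioo (0 : ℝ) 1, f u + (1 - l) * (m / 2 * ‖z - u‖ ^ 2) ≤ f z := by
    rintro l ⟨hl0, hl1⟩
    have hcomb := hf.2 hu hz (sub_nonneg.2 hl1.le) hl0.le (sub_add_cancel 1 l)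
    have hle : f u ≤ f ((1 - l) • u + l • z) :=
      hmin (hf.1 hu hz (sub_nonneg.2 hl1.le) hl0.le (sub_add_cancel 1 l))
    rw [norm_sub_rev, smul_eq_mul, smul_eq_mul] at hcomb
    nlinarith
  have hlim : Tendsto (fun l : ℝ => f u + (1 - l) * (m / 2 * ‖z - u‖ ^ 2)) (𝓝[>] 0)
      (𝓝 (f u + m / 2 * ‖z - u‖ ^ 2)) := by
    have hcont : Continuous fun l : ℝ => f u + (1 - l) * (m / 2 * ‖z - u‖ ^ 2) := by fun_prop
    simpa using (hcont.tendsto 0).mono_left nhdsWithin_le_nhds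
  exact le_of_tendsto hlim (eventually_of_mem (Ioo_mem_nhdsGT zero_lt_one) hsegment)

theorem ConvexOn.strongConvexOn_add_mul_sq_norm_sub {h : E → ℝ} (hh : ConvexOn ℝ s h)
    (α : ℝ) (c : E) : StrongConvexOn s (2 * α) fun z => h z + α * ‖z - c‖ ^ 2 := by
  rw [strongConvexOn_iff_convex]
  have haff : ConvexOn ℝ s fun z => (-2 * α) * ⟪c, z⟫ + α * ‖c‖ ^ 2 :=
    (((-2 * α) • innerₛₗ ℝ c).convexOn hh.1).add_const _
  refine (hh.add haff).congr fun z _ => ?_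
  simp only [Pi.add_apply, norm_sub_sq_real, real_inner_comm c z]
  ring

theorem ConvexOn.add_mul_sq_norm_sub_le_of_isMinOn {h : E → ℝ} {α : ℝ} {c u z : E}
    (hh : ConvexOn ℝ s h) (hmin : IsMinOn (fun z => h z + α * ‖z - c‖ ^ 2) s u) (hu : u ∈ s)
    (hz : z ∈ s) : h u + α * ‖u - c‖ ^ 2 + α * ‖z - u‖ ^ 2 ≤ h z + α * ‖z - c‖ ^ 2 := by
  have := (hh.strongConvexOn_add_mul_sq_norm_sub α c).add_sq_norm_sub_le_of_isMinOn hmin hu hz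
  rwa [mul_div_cancel_left₀ α two_ne_zero] at this

theorem convexOn_inner_sub (hs : Convex ℝ s) (d c : E) : ConvexOn ℝ s fun z => ⟪d, z - c⟫ :=
  (((innerₛₗ ℝ d).convexOn hs).add_const (-⟪d, c⟫)).congr fun z _ => by
    simp [inner_sub_right, ← sub_eq_add_neg]

theorem convexOn_sum_mul {ι : Type*} (t : Finset ι) {w : ι → ℝ} {g : ι → E → ℝ}
    (hs : Convex ℝ s) (hw : ∀ i ∈ t, 0 ≤ w i) (hg : ∀ i ∈ t, ConvexOn ℝ s (g i)) :
    ConvexOn ℝ s fun z => ∑ i ∈ t, w i * g i z := by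
  classical
  induction t using Finset.induction_on with
  | empty => simpa using convexOn_const (0 : ℝ) hs
  | insert i t hi ih =>
    simp only [sum_insert hi]
    exact ((hg i (mem_insert_self i t)).smul (hw i (mem_insert_self i t))).add
      (ih (fun j hj => hw j (mem_insert_of_mem hj)) fun j hj => hg j (mem_insert_of_mem hj))

theorem real_inner_le_sq_norm_div_add_mul_sq_norm (a b : E) {η : ℝ} (hη : 0 < η) :
    ⟪a, b⟫ ≤ ‖a‖ ^ 2 / (2 * η) + η / 2 * ‖b‖ ^ 2 := by
  have hsq : ‖a‖ ^ 2 / (2 * η) + η / 2 * ‖b‖ ^ 2 - ‖a‖ * ‖b‖ =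
      (‖a‖ - η * ‖b‖) ^ 2 / (2 * η) := by
    field_simp
    ring
  have := real_inner_le_norm a b
  have : 0 ≤ (‖a‖ - η * ‖b‖) ^ 2 / (2 * η) := by positivity
  linarith

theorem penalty_add_drift_le_of_isMinOn [CompleteSpace E] {ι : Type*} [Fintype ι]
    (hs : Convex ℝ s)
    {f : E → ℝ} {G : E → EuclideanSpace ℝ ι} {w : ι → ℝ} {d u v z : E} {α β η : ℝ}
    (hf : ConvexOn ℝ s f) (hd : HasGradientAt f d u) (hG : ∀ i, ConvexOn ℝ s fun y => G y i)
    (hw : ∀ i, 0 ≤ w i)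
    (hmin : IsMinOn (fun y => ⟪d, y - u⟫ + ∑ i, w i * G y i + α * ‖y - u‖ ^ 2) s v)
    (hu : u ∈ s) (hv : v ∈ s) (hz : z ∈ s) (hGz : ∀ i, G z i ≤ 0)
    (hGlip : ‖G v - G u‖ ≤ β * ‖v - u‖) (hη : 0 < η) (hα : (β ^ 2 + η) / 2 ≤ α) :
    f u + (∑ i, w i * G v i + ‖G v - G u‖ ^ 2 / 2) + α * ‖z - v‖ ^ 2 ≤
      f z + α * ‖z - u‖ ^ 2 + ‖d‖ ^ 2 / (2 * η) := by
  have hlin := hf.add_inner_sub_le_of_hasGradientAt hu hz hd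
  have hobj : ConvexOn ℝ s fun y => ⟪d, y - u⟫ + ∑ i, w i * G y i :=
    (convexOn_inner_sub hs d u).add (convexOn_sum_mul univ hs (fun i _ => hw i) fun i _ => hG i)
  have hprox := hobj.add_mul_sq_norm_sub_le_of_isMinOn hmin hv hz
  have hyoung := real_inner_le_sq_norm_div_add_mul_sq_norm d (u - v) hη
  rw [← neg_sub v u, inner_neg_right, norm_neg] at hyoung
  have hGz' : ∑ i, w i * G z i ≤ 0 :=
    sum_nonpos fun i _ => mul_nonpos_of_nonneg_of_nonpos (hw i) (hGz i)
  have hlip : ‖G v - G u‖ ^ 2 ≤ β ^ 2 * ‖v - u‖ ^ 2 := by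
    rw [← mul_pow]
    exact pow_le_pow_left₀ (norm_nonneg _) hGlip 2
  have hα' : (β ^ 2 + η) / 2 * ‖v - u‖ ^ 2 ≤ α * ‖v - u‖ ^ 2 := by gcongr
  linarith

end Convexity

theorem sq_max_neg_add_sub_le (q a b : ℝ) :
    max (-b) (q + b) ^ 2 - b ^ 2 - (q ^ 2 - a ^ 2) ≤ 2 * ((q + a) * b) + (b - a) ^ 2 := by
  rcases max_choice (-b) (q + b) with h | h <;> rw [h] <;> nlinarith [sq_nonneg (q + b)]

section VirtualQueue

variable {ι : Type*} {Q : ℕ → ι → ℝ} {c : ℕ → EuclideanSpace ℝ ι}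

noncomputable def queuePotential [Fintype ι] (Q : ℕ → ι → ℝ) (c : ℕ → EuclideanSpace ℝ ι)
    (t : ℕ) : ℝ :=
  ((∑ i, Q t i ^ 2) - ‖c t‖ ^ 2) / 2

theorem virtualQueue_nonneg (hQ0 : ∀ i, Q 0 i = 0)
    (hQ : ∀ t i, Q (t + 1) i = max (-c (t + 1) i) (Q t i + c (t + 1) i)) (t : ℕ) (i : ι) :
    0 ≤ Q t i := by
  induction t with
  | zero => exact (hQ0 i).ge
  | succ t ih =>
    rw [hQ]
    rcases le_total 0 (c (t + 1) i) with h | h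
    · exact le_max_of_le_right (by linarith)
    · exact le_max_of_le_left (by linarith)

theorem abs_le_virtualQueue_succ (hQ0 : ∀ i, Q 0 i = 0)
    (hQ : ∀ t i, Q (t + 1) i = max (-c (t + 1) i) (Q t i + c (t + 1) i)) (t : ℕ) (i : ι) :
    |c (t + 1) i| ≤ Q (t + 1) i := by
  rw [hQ, abs_eq_max_neg, max_comm]
  exact max_le_max le_rfl (le_add_of_nonneg_left (virtualQueue_nonneg hQ0 hQ t i))

theorem virtualQueue_add_nonneg (hQ0 : ∀ i, Q 0 i = 0)
    (hQ : ∀ t i, Q (t + 1) i = max (-c (t + 1) i) (Q t i + c (t + 1) i)) {t : ℕ} (ht : 1 ≤ t)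
    (i : ι) : 0 ≤ Q t i + c t i := by
  obtain ⟨t, rfl⟩ := Nat.exists_eq_add_of_le' ht
  linarith [neg_abs_le (c (t + 1) i), abs_le_virtualQueue_succ hQ0 hQ t i]

theorem queuePotential_one [Fintype ι] (hQ0 : ∀ i, Q 0 i = 0)
    (hQ : ∀ t i, Q (t + 1) i = max (-c (t + 1) i) (Q t i + c (t + 1) i)) :
    queuePotential Q c 1 = 0 := by
  have hQ1 : ∀ i, Q 1 i = |c 1 i| := fun i => by
    rw [hQ 0 i, hQ0, abs_eq_max_neg, max_comm]
    norm_num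
  simp [queuePotential, hQ1, EuclideanSpace.real_norm_sq_eq]

theorem queuePotential_succ_nonneg [Fintype ι] (hQ0 : ∀ i, Q 0 i = 0)
    (hQ : ∀ t i, Q (t + 1) i = max (-c (t + 1) i) (Q t i + c (t + 1) i)) (t : ℕ) :
    0 ≤ queuePotential Q c (t + 1) := by
  rw [queuePotential, EuclideanSpace.real_norm_sq_eq, ← sum_sub_distrib]
  refine div_nonneg (sum_nonneg fun i _ => ?_) zero_le_two
  rw [sub_nonneg, ← sq_abs (c _ i)]
  exact pow_le_pow_left₀ (abs_nonneg _) (abs_le_virtualQueue_succ hQ0 hQ t i) 2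

theorem queuePotential_succ_sub_le [Fintype ι]
    (hQ : ∀ t i, Q (t + 1) i = max (-c (t + 1) i) (Q t i + c (t + 1) i)) (t : ℕ) :
    queuePotential Q c (t + 1) - queuePotential Q c t ≤
      ∑ i, (Q t i + c t i) * c (t + 1) i + ‖c (t + 1) - c t‖ ^ 2 / 2 := by
  have hcoord := sum_le_sum fun i (_ : i ∈ univ) =>
    sq_max_neg_add_sub_le (Q t i) (c t i) (c (t + 1) i)
  simp only [← hQ] at hcoord
  simp only [queuePotential, EuclideanSpace.real_norm_sq_eq, PiLp.sub_apply, sum_add_distrib,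
    sum_sub_distrib, ← mul_sum] at hcoord ⊢
  linarith

end VirtualQueue

theorem sum_Icc_le_of_add_sub_le {a b Φ : ℕ → ℝ} {C : ℝ} {T : ℕ}
    (h : ∀ t ∈ Icc 1 T, a t + (Φ (t + 1) - Φ t) ≤ b t + C) (hΦ : 0 ≤ Φ (T + 1)) :
    ∑ t ∈ Icc 1 T, a t ≤ ∑ t ∈ Icc 1 T, b t + Φ 1 + T * C := by
  have htelescope : ∑ t ∈ Icc 1 T, (Φ (t + 1) - Φ t) = Φ (T + 1) - Φ 1 := by
    rw [← Ico_add_one_right_eq_Icc, sum_Ico_sub Φ (by omega)]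
  have hsum := sum_le_sum h
  rw [sum_add_distrib, sum_add_distrib, htelescope, sum_const, Nat.card_Icc, Nat.add_sub_cancel,
    nsmul_eq_mul] at hsum
  linarith

theorem stmt2_general {n m : ℕ}
    (X₀ : Set (EuclideanSpace ℝ (Fin n)))
    (hconv : Convex ℝ X₀)
    (β γ α η : ℝ)
    (T : ℕ)
    (f : ℕ → EuclideanSpace ℝ (Fin n) → ℝ)
    (fgrad : ℕ → EuclideanSpace ℝ (Fin n) → EuclideanSpace ℝ (Fin n))
    (hfconv : ∀ t ∈ Finset.Icc 1 T, ConvexOn ℝ Set.univ (f t))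
    (hfgrad : ∀ t ∈ Finset.Icc 1 T, ∀ x, HasGradientAt (f t) (fgrad t x) x)
    (hfgradbd : ∀ t ∈ Finset.Icc 1 T, ∀ x ∈ X₀, ‖fgrad t x‖ ≤ 1)
    (g : EuclideanSpace ℝ (Fin n) → EuclideanSpace ℝ (Fin m))
    (hgconv : ∀ i, ConvexOn ℝ Set.univ (fun x => g x i))
    (hglip : ∀ x ∈ X₀, ∀ y ∈ X₀, ‖g x - g y‖ ≤ β * ‖x - y‖)
    (hγ : 0 < γ)
    (hη : 0 < η) (hα : (1 / 2) * (γ ^ 2 * β ^ 2 + η) ≤ α)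
    -- the virtual-queue online algorithm
    (x : ℕ → EuclideanSpace ℝ (Fin n))
    (Q : ℕ → Fin m → ℝ)
    (hx1 : x 1 ∈ X₀)
    (hQ0 : ∀ i, Q 0 i = 0)
    (hQ : ∀ t, 1 ≤ t → ∀ i,
      Q t i = max (-(γ * g (x t) i)) (Q (t - 1) i + γ * g (x t) i))
    (hxupd : ∀ t, 1 ≤ t → x (t + 1) ∈ X₀ ∧
      ∀ z ∈ X₀,
        ⟪fgrad t (x t), x (t + 1) - x t⟫
            + (∑ i, (Q t i + γ * g (x t) i) * (γ * g (x (t + 1)) i))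
            + α * ‖x (t + 1) - x t‖ ^ 2 ≤
          ⟪fgrad t (x t), z - x t⟫
            + (∑ i, (Q t i + γ * g (x t) i) * (γ * g z i))
            + α * ‖z - x t‖ ^ 2)
    -- any fixed feasible point
    (xs : EuclideanSpace ℝ (Fin n)) (hxs : xs ∈ X₀)
    (hfeas : ∀ i, g xs i ≤ 0) :
    ∑ t ∈ Finset.Icc 1 T, f t (x t) ≤
      ∑ t ∈ Finset.Icc 1 T, f t xs + α * ‖xs - x 1‖ ^ 2 + T / (2 * η) := by
  have hxX : ∀ t, 1 ≤ t → x t ∈ X₀ := fun t ht => by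
    induction t, ht using Nat.le_induction with
    | base => exact hx1
    | succ t ht _ => exact (hxupd t ht).1
  set G : EuclideanSpace ℝ (Fin n) → EuclideanSpace ℝ (Fin m) := fun z => γ • g z
  have hQG : ∀ t i, Q (t + 1) i = max (-(G ∘ x) (t + 1) i) (Q t i + (G ∘ x) (t + 1) i) :=
    fun t i => by simpa [G] using hQ (t + 1) t.succ_pos i
  set Φ : ℕ → ℝ := fun t => α * ‖xs - x t‖ ^ 2 + queuePotential Q (G ∘ x) t
  have hround : ∀ t ∈ Icc 1 T, f t (x t) + (Φ (t + 1) - Φ t) ≤ f t xs + 1 / (2 * η) := by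
    intro t ht
    have ht1 : 1 ≤ t := (mem_Icc.1 ht).1
    have hGlip : ‖G (x (t + 1)) - G (x t)‖ ≤ γ * β * ‖x (t + 1) - x t‖ := by
      rw [← smul_sub, norm_smul, Real.norm_of_nonneg hγ.le, mul_assoc]
      exact mul_le_mul_of_nonneg_left (hglip _ (hxupd t ht1).1 _ (hxX t ht1)) hγ.le
    have hgrad : ‖fgrad t (x t)‖ ^ 2 / (2 * η) ≤ 1 / (2 * η) := by
      gcongr
      exact pow_le_one₀ (norm_nonneg _) (hfgradbd t ht (x t) (hxX t ht1))
    have hstep := penalty_add_drift_le_of_isMinOn (G := G) (α := α) hconv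
      ((hfconv t ht).subset (Set.subset_univ _) hconv) (hfgrad t ht (x t))
      (fun i => ((hgconv i).subset (Set.subset_univ _) hconv).smul hγ.le)
      (virtualQueue_add_nonneg hQ0 hQG ht1) (fun z hz => (hxupd t ht1).2 z hz) (hxX t ht1)
      (hxupd t ht1).1 hxs (fun i => mul_nonpos_of_nonneg_of_nonpos hγ.le (hfeas i)) hGlip hη
      (by linarith [mul_pow γ β 2])
    have hdrift := queuePotential_succ_sub_le hQG t
    simp only [Φ, Function.comp_apply] at hstep hdrift ⊢
    linarith
  have hΦ_nonneg : 0 ≤ Φ (T + 1) :=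
    add_nonneg (mul_nonneg (by nlinarith [sq_nonneg (γ * β)]) (sq_nonneg _))
      (queuePotential_succ_nonneg hQ0 hQG T)
  have hΦ1 : Φ 1 = α * ‖xs - x 1‖ ^ 2 := by simp [Φ, queuePotential_one hQ0 hQG]
  have hregret := sum_Icc_le_of_add_sub_le hround hΦ_nonneg
  rw [hΦ1, mul_one_div] at hregret
  exact hregret

/-- Lemma 2, part 1 (regret bound of the virtual-queue online algorithm):
if `α ≥ (1/2)(γ²β² + η)`, then for any fixed feasible `x* ∈ X₀` (i.e. with
`g_i(x*) ≤ 0` for all `i`) the iterates satisfy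
`Σ_{t=1}^T f^t(x(t)) ≤ Σ_{t=1}^T f^t(x*) + α‖x* − x(1)‖² + T/(2η)`. -/
theorem stmt2 {n m : ℕ}
    (X₀ : Set (EuclideanSpace ℝ (Fin n))) (hne : X₀.Nonempty)
    (hcomp : IsCompact X₀) (hconv : Convex ℝ X₀)
    (G₁ G₂ β γ ε α η : ℝ) (hG₁ : 0 < G₁)
    (hdiam : ∀ x ∈ X₀, ∀ y ∈ X₀, ‖x - y‖ ≤ G₁)
    (T : ℕ) (hT : 1 ≤ T)
    (f : ℕ → EuclideanSpace ℝ (Fin n) → ℝ)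
    (fgrad : ℕ → EuclideanSpace ℝ (Fin n) → EuclideanSpace ℝ (Fin n))
    (hfconv : ∀ t ∈ Finset.Icc 1 T, ConvexOn ℝ Set.univ (f t))
    (hfgrad : ∀ t ∈ Finset.Icc 1 T, ∀ x, HasGradientAt (f t) (fgrad t x) x)
    (hfgradbd : ∀ t ∈ Finset.Icc 1 T, ∀ x ∈ X₀, ‖fgrad t x‖ ≤ 1)
    (g : EuclideanSpace ℝ (Fin n) → EuclideanSpace ℝ (Fin m))
    (hgconv : ∀ i, ConvexOn ℝ Set.univ (fun x => g x i))
    (hgbd : ∀ x ∈ X₀, ‖g x‖ ≤ G₂)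
    (hglip : ∀ x ∈ X₀, ∀ y ∈ X₀, ‖g x - g y‖ ≤ β * ‖x - y‖)
    (hγ : 0 < γ) (hε : 0 < ε)
    (xhat : EuclideanSpace ℝ (Fin n)) (hxhat : xhat ∈ X₀)
    (hslater : ∀ i, g xhat i ≤ -ε)
    (hη : 0 < η) (hα : (1 / 2) * (γ ^ 2 * β ^ 2 + η) ≤ α)
    -- the virtual-queue online algorithm
    (x : ℕ → EuclideanSpace ℝ (Fin n))
    (Q : ℕ → Fin m → ℝ)
    (hx1 : x 1 ∈ X₀)
    (hQ0 : ∀ i, Q 0 i = 0)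
    (hQ : ∀ t, 1 ≤ t → ∀ i,
      Q t i = max (-(γ * g (x t) i)) (Q (t - 1) i + γ * g (x t) i))
    (hxupd : ∀ t, 1 ≤ t → x (t + 1) ∈ X₀ ∧
      ∀ z ∈ X₀,
        ⟪fgrad t (x t), x (t + 1) - x t⟫
            + (∑ i, (Q t i + γ * g (x t) i) * (γ * g (x (t + 1)) i))
            + α * ‖x (t + 1) - x t‖ ^ 2 ≤
          ⟪fgrad t (x t), z - x t⟫
            + (∑ i, (Q t i + γ * g (x t) i) * (γ * g z i))
            + α * ‖z - x t‖ ^ 2)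
    -- any fixed feasible point
    (xs : EuclideanSpace ℝ (Fin n)) (hxs : xs ∈ X₀)
    (hfeas : ∀ i, g xs i ≤ 0) :
    ∑ t ∈ Finset.Icc 1 T, f t (x t) ≤
      ∑ t ∈ Finset.Icc 1 T, f t xs + α * ‖xs - x 1‖ ^ 2 + T / (2 * η) :=
  stmt2_general X₀ hconv β γ α η T f fgrad hfconv hfgrad hfgradbd g hgconv hglip hγ hη hα x Q hx1
    hQ0 hQ hxupd xs hxs hfeas
end

section
/- (Lemma 2, part 2: constraint violation bound of the virtual-queue algorithm.) Let η > 0 and suppose the algorithm parameter satisfies α ≥ (1/2)(γ²β² + η). Then for all T ≥ 1 and every constraint index i ∈ {1,…,m}, the iterates x(1),…,x(T) of the virtual-queue online algorithm satisfy Σ_{t=1}^T g_i(x(t)) ≤ 2G₂ + (αG₁² + G₁)/(γ²ε) + 2G₂²/ε. -/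
/-!
The virtual queue dominates the accumulated constraint values,
`γ ∑_{t ≤ T} gᵢ(x(t)) ≤ Qᵢ(T) ≤ ‖Q(T)‖`, so it suffices to bound `‖Q(T)‖`. Comparing the primal
update with the Slater point `x̂` gives the drift inequality
`‖Q(k+1)‖² ≤ ‖Q(k)‖² - 2γε‖Q(k)‖ + 2C`: the queue cannot grow while `‖Q(k)‖ ≥ C / (γε)`, and it
grows by at most `γG₂` per step, hence `‖Q(T)‖ ≤ C / (γε) + γG₂`.
-/

open RealInnerProductSpace

namespace EuclideanSpace

variable {ι : Type*} [Fintype ι]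

theorem real_inner_eq_sum (u v : EuclideanSpace ℝ ι) : ⟪u, v⟫ = ∑ i, u i * v i := by
  simp [PiLp.inner_apply, mul_comm]

theorem norm_le_sum_of_nonneg {u : EuclideanSpace ℝ ι} (hu : ∀ i, 0 ≤ u i) :
    ‖u‖ ≤ ∑ i, u i := by
  refine abs_le_of_sq_le_sq' ?_ (Finset.sum_nonneg fun i _ => hu i) |>.2
  rw [real_norm_sq_eq]
  exact Finset.sum_sq_le_sq_sum_of_nonneg fun i _ => hu i

theorem norm_le_norm_of_abs_le_abs {u v : EuclideanSpace ℝ ι} (h : ∀ i, |u i| ≤ |v i|) :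
    ‖u‖ ≤ ‖v‖ := by
  refine abs_le_of_sq_le_sq' ?_ (norm_nonneg v) |>.2
  simp only [real_norm_sq_eq]
  exact Finset.sum_le_sum fun i _ => sq_le_sq.2 (h i)

theorem inner_le_neg_mul_norm {p v : EuclideanSpace ℝ ι} {c : ℝ} (hc : 0 ≤ c)
    (hp : ∀ i, 0 ≤ p i) (hv : ∀ i, v i ≤ -c) : ⟪p, v⟫ ≤ -(c * ‖p‖) :=
  calc ⟪p, v⟫ ≤ ∑ i, p i * -c := by
        rw [real_inner_eq_sum]
        exact Finset.sum_le_sum fun i _ => mul_le_mul_of_nonneg_left (hv i) (hp i)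
    _ = -(c * ∑ i, p i) := by rw [← Finset.sum_mul]; ring
    _ ≤ -(c * ‖p‖) := neg_le_neg <| mul_le_mul_of_nonneg_left (norm_le_sum_of_nonneg hp) hc

end EuclideanSpace

def IsVirtualQueue {ι : Type*} (a Q : ℕ → EuclideanSpace ℝ ι) : Prop :=
  ∀ k i, Q (k + 1) i = max (-a (k + 1) i) (Q k i + a (k + 1) i)

namespace IsVirtualQueue

variable {ι : Type*} {a Q : ℕ → EuclideanSpace ℝ ι}

theorem nonneg (hQ : IsVirtualQueue a Q)
    (h0 : ∀ i, 0 ≤ Q 0 i) (k : ℕ) (i : ι) : 0 ≤ Q k i := by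
  induction k with
  | zero => exact h0 i
  | succ k ih =>
    rw [hQ]
    rcases le_total 0 (a (k + 1) i) with h | h
    · exact (by linarith : 0 ≤ Q k i + a (k + 1) i).trans (le_max_right _ _)
    · exact (neg_nonneg.2 h).trans (le_max_left _ _)

theorem add_arrival_nonneg (hQ : IsVirtualQueue a Q)
    {k : ℕ} (hk : 0 < k) (i : ι) : 0 ≤ Q k i + a k i := by
  obtain ⟨k, rfl⟩ := Nat.exists_eq_add_one_of_ne_zero hk.ne'
  linarith [hQ k i ▸ le_max_left (-a (k + 1) i) (Q k i + a (k + 1) i)]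

theorem sum_arrival_le (hQ : IsVirtualQueue a Q)
    (h0 : ∀ i, 0 ≤ Q 0 i) (N : ℕ) (i : ι) : ∑ t ∈ Finset.Icc 1 N, a t i ≤ Q N i := by
  induction N with
  | zero => simpa using h0 i
  | succ N ih =>
    rw [Finset.sum_Icc_succ_top N.succ_pos, hQ]
    linarith [le_max_right (-a (N + 1) i) (Q N i + a (N + 1) i)]

theorem norm_succ_sub_le [Fintype ι] (hQ : IsVirtualQueue a Q)
    (h0 : ∀ i, 0 ≤ Q 0 i) (k : ℕ) : ‖Q (k + 1) - Q k‖ ≤ ‖a (k + 1)‖ := by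
  refine EuclideanSpace.norm_le_norm_of_abs_le_abs fun i => ?_
  have hq := hQ.nonneg h0 k i
  rw [PiLp.sub_apply, hQ, abs_le]
  constructor <;> cases max_cases (-a (k + 1) i) (Q k i + a (k + 1) i) <;>
    linarith [le_abs_self (a (k + 1) i), neg_abs_le (a (k + 1) i)]

theorem norm_succ_sq_le [Fintype ι] (hQ : IsVirtualQueue a Q) (k : ℕ) :
    ‖Q (k + 1)‖ ^ 2 ≤ ‖Q k‖ ^ 2 + 2 * ⟪Q k, a (k + 1)⟫ + 2 * ‖a (k + 1)‖ ^ 2 := by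
  simp only [EuclideanSpace.real_norm_sq_eq, EuclideanSpace.real_inner_eq_sum, Finset.mul_sum,
    ← Finset.sum_add_distrib]
  refine Finset.sum_le_sum fun i _ => ?_
  rw [hQ]
  rcases max_cases (-a (k + 1) i) (Q k i + a (k + 1) i) with ⟨h, -⟩ | ⟨h, -⟩ <;> rw [h] <;>
    nlinarith [sq_nonneg (Q k i + a (k + 1) i), sq_nonneg (a (k + 1) i)]

end IsVirtualQueue

theorem le_div_add_of_drift {r : ℕ → ℝ} {T : ℕ} {c C δ : ℝ} (hc : 0 < c) (hC : 0 ≤ C)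
    (hδ : 0 ≤ δ) (h0 : r 0 = 0) (hstep : ∀ k < T, r (k + 1) ≤ r k + δ)
    (hdrift : ∀ k, 0 < k → k < T → r (k + 1) ^ 2 ≤ r k ^ 2 - 2 * c * r k + 2 * C) :
    ∀ k ≤ T, r k ≤ C / c + δ := by
  have hCc : 0 ≤ C / c := div_nonneg hC hc.le
  intro k hk
  induction k with
  | zero => linarith
  | succ k ih =>
    have hkT : k < T := hk
    rcases Nat.eq_zero_or_pos k with rfl | hk0
    · linarith [hstep 0 hkT]
    rcases lt_or_ge (r k) (C / c) with hsmall | hlarge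
    · linarith [hstep k hkT]
    · have hCle : C ≤ c * r k := (div_le_iff₀' hc).1 hlarge
      have hdec : r (k + 1) ≤ r k :=
        (abs_le_of_sq_le_sq' (by nlinarith [hdrift k hk0 hkT]) (hCc.trans hlarge)).2
      linarith [ih hkT.le]

theorem inner_queue_le_of_primal_step {E : Type*} [NormedAddCommGroup E] [InnerProductSpace ℝ E]
    {ι : Type*} [Fintype ι] {d u u' û : E} {q a a' â : EuclideanSpace ℝ ι} {α c D G : ℝ}
    (hα : 0 ≤ α) (hc : 0 ≤ c) (hd : ‖d‖ ≤ 1) (hu' : ‖û - u'‖ ≤ D) (hu : ‖û - u‖ ≤ D)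
    (ha : ‖a‖ ≤ G) (ha' : ‖a'‖ ≤ G) (hqa : ∀ i, 0 ≤ q i + a i) (hâ : ∀ i, â i ≤ -c)
    (hopt : ⟪d, u' - u⟫ + ⟪q + a, a'⟫ + α * ‖u' - u‖ ^ 2 ≤
      ⟪d, û - u⟫ + ⟪q + a, â⟫ + α * ‖û - u‖ ^ 2) :
    ⟪q, a'⟫ ≤ D + α * D ^ 2 + G ^ 2 + c * G - c * ‖q‖ := by
  have hgrad : ⟪d, û - u⟫ - ⟪d, u' - u⟫ ≤ D := by
    rw [← inner_sub_right, sub_sub_sub_cancel_right]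
    exact (real_inner_le_norm d _).trans <| (mul_le_of_le_one_left (norm_nonneg _) hd).trans hu'
  have hslater : ⟪q + a, â⟫ ≤ -(c * (‖q‖ - G)) := by
    refine (EuclideanSpace.inner_le_neg_mul_norm hc hqa hâ).trans (neg_le_neg ?_)
    refine mul_le_mul_of_nonneg_left ?_ hc
    linarith [show ‖q‖ ≤ ‖q + a‖ + ‖a‖ by simpa using norm_sub_le (q + a) a]
  have hcross : -G ^ 2 ≤ ⟪a, a'⟫ := by
    have := abs_real_inner_le_norm a a'
    nlinarith [neg_abs_le ⟪a, a'⟫, norm_nonneg a, norm_nonneg a']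
  have hprox : α * ‖û - u‖ ^ 2 ≤ α * D ^ 2 :=
    mul_le_mul_of_nonneg_left (pow_le_pow_left₀ (norm_nonneg _) hu 2) hα
  rw [inner_add_left] at hopt
  nlinarith [mul_nonneg hα (sq_nonneg ‖u' - u‖)]

theorem stmt3_general {n m : ℕ}
    (X₀ : Set (EuclideanSpace ℝ (Fin n)))
    (G₁ G₂ β γ ε α η : ℝ)
    (hdiam : ∀ x ∈ X₀, ∀ y ∈ X₀, ‖x - y‖ ≤ G₁)
    (T : ℕ)
    (fgrad : ℕ → EuclideanSpace ℝ (Fin n) → EuclideanSpace ℝ (Fin n))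
    (hfgradbd : ∀ t ∈ Finset.Icc 1 T, ∀ x ∈ X₀, ‖fgrad t x‖ ≤ 1)
    (g : EuclideanSpace ℝ (Fin n) → EuclideanSpace ℝ (Fin m))
    (hgbd : ∀ x ∈ X₀, ‖g x‖ ≤ G₂)
    (hγ : 0 < γ) (hε : 0 < ε)
    (xhat : EuclideanSpace ℝ (Fin n)) (hxhat : xhat ∈ X₀)
    (hslater : ∀ i, g xhat i ≤ -ε)
    (hη : 0 < η) (hα : (1 / 2) * (γ ^ 2 * β ^ 2 + η) ≤ α)
    -- the virtual-queue online algorithm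
    (x : ℕ → EuclideanSpace ℝ (Fin n))
    (Q : ℕ → Fin m → ℝ)
    (hx1 : x 1 ∈ X₀)
    (hQ0 : ∀ i, Q 0 i = 0)
    (hQ : ∀ t, 1 ≤ t → ∀ i,
      Q t i = max (-(γ * g (x t) i)) (Q (t - 1) i + γ * g (x t) i))
    (hxupd : ∀ t, 1 ≤ t → x (t + 1) ∈ X₀ ∧
      ∀ z ∈ X₀,
        ⟪fgrad t (x t), x (t + 1) - x t⟫
            + (∑ i, (Q t i + γ * g (x t) i) * (γ * g (x (t + 1)) i))
            + α * ‖x (t + 1) - x t‖ ^ 2 ≤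
          ⟪fgrad t (x t), z - x t⟫
            + (∑ i, (Q t i + γ * g (x t) i) * (γ * g z i))
            + α * ‖z - x t‖ ^ 2)
    :
    ∀ i, ∑ t ∈ Finset.Icc 1 T, g (x t) i ≤
      2 * G₂ + (α * G₁ ^ 2 + G₁) / (γ ^ 2 * ε) + 2 * G₂ ^ 2 / ε := by
  intro i
  have hα₀ : 0 ≤ α := by nlinarith [sq_nonneg (γ * β)]
  have hmem : ∀ t, 0 < t → x t ∈ X₀
    | 1, _ => hx1
    | t + 2, _ => (hxupd (t + 1) t.succ_pos).1
  have hG₁ : 0 ≤ G₁ := by simpa using hdiam _ hx1 _ hx1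
  have hG₂ : 0 ≤ G₂ := (norm_nonneg _).trans (hgbd _ hx1)
  set a : ℕ → EuclideanSpace ℝ (Fin m) := fun t => γ • g (x t)
  set q : ℕ → EuclideanSpace ℝ (Fin m) := fun t => WithLp.toLp 2 (Q t)
  have hq : IsVirtualQueue a q := fun k => hQ (k + 1) k.succ_pos
  have hq0 : ∀ j, 0 ≤ q 0 j := fun j => (hQ0 j).ge
  have ha : ∀ t, 0 < t → ‖a t‖ ≤ γ * G₂ := fun t ht => by
    rw [norm_smul, Real.norm_of_nonneg hγ.le]
    exact mul_le_mul_of_nonneg_left (hgbd _ (hmem t ht)) hγ.le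
  set C := G₁ + α * G₁ ^ 2 + γ * ε * (γ * G₂) + 2 * (γ * G₂) ^ 2 with hC
  have hdrift : ∀ k, 0 < k → k < T →
      ‖q (k + 1)‖ ^ 2 ≤ ‖q k‖ ^ 2 - 2 * (γ * ε) * ‖q k‖ + 2 * C := by
    intro k hk hkT
    have hopt : ⟪fgrad k (x k), x (k + 1) - x k⟫ + ⟪q k + a k, a (k + 1)⟫
        + α * ‖x (k + 1) - x k‖ ^ 2 ≤
        ⟪fgrad k (x k), xhat - x k⟫ + ⟪q k + a k, γ • g xhat⟫ + α * ‖xhat - x k‖ ^ 2 := by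
      simp only [EuclideanSpace.real_inner_eq_sum (q k + a k)]
      exact (hxupd k hk).2 xhat hxhat
    have hslater' : ∀ j, (γ • g xhat) j ≤ -(γ * ε) := fun j => by
      simpa using mul_le_mul_of_nonneg_left (hslater j) hγ.le
    have hinner := inner_queue_le_of_primal_step hα₀ (mul_pos hγ hε).le
      (hfgradbd k (Finset.mem_Icc.2 ⟨hk, hkT.le⟩) _ (hmem k hk))
      (hdiam _ hxhat _ (hxupd k hk).1) (hdiam _ hxhat _ (hmem k hk))
      (ha k hk) (ha (k + 1) k.succ_pos) (hq.add_arrival_nonneg hk) hslater' hopt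
    nlinarith [hq.norm_succ_sq_le k,
      pow_le_pow_left₀ (norm_nonneg _) (ha (k + 1) k.succ_pos) 2]
  have hstep : ∀ k < T, ‖q (k + 1)‖ ≤ ‖q k‖ + γ * G₂ := fun k _ => by
    linarith [norm_le_norm_add_norm_sub' (q (k + 1)) (q k), hq.norm_succ_sub_le hq0 k,
      ha (k + 1) k.succ_pos]
  have hbound : ‖q T‖ ≤ C / (γ * ε) + γ * G₂ :=
    le_div_add_of_drift (r := fun k => ‖q k‖) (mul_pos hγ hε) (by positivity) (by positivity)
      (by simp [q, show Q 0 = 0 from funext hQ0]) hstep hdrift T le_rfl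
  have hsum : γ * ∑ t ∈ Finset.Icc 1 T, g (x t) i ≤ ‖q T‖ := by
    rw [Finset.mul_sum]
    exact (hq.sum_arrival_le hq0 T i).trans <|
      (le_abs_self _).trans (PiLp.norm_apply_le (q T) i)
  calc ∑ t ∈ Finset.Icc 1 T, g (x t) i ≤ (C / (γ * ε) + γ * G₂) / γ := by
        rw [le_div_iff₀ hγ]; linarith
    _ = 2 * G₂ + (α * G₁ ^ 2 + G₁) / (γ ^ 2 * ε) + 2 * G₂ ^ 2 / ε := by
        rw [hC]; field_simp; ring

/-- Lemma 2, part 2 (constraint violation bound of the virtual-queue online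
algorithm): if `α ≥ (1/2)(γ²β² + η)`, then for all `T ≥ 1` and every constraint
index `i`, `Σ_{t=1}^T g_i(x(t)) ≤ 2G₂ + (αG₁² + G₁)/(γ²ε) + 2G₂²/ε`. -/
theorem stmt3 {n m : ℕ}
    (X₀ : Set (EuclideanSpace ℝ (Fin n))) (hne : X₀.Nonempty)
    (hcomp : IsCompact X₀) (hconv : Convex ℝ X₀)
    (G₁ G₂ β γ ε α η : ℝ) (hG₁ : 0 < G₁)
    (hdiam : ∀ x ∈ X₀, ∀ y ∈ X₀, ‖x - y‖ ≤ G₁)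
    (T : ℕ) (hT : 1 ≤ T)
    (f : ℕ → EuclideanSpace ℝ (Fin n) → ℝ)
    (fgrad : ℕ → EuclideanSpace ℝ (Fin n) → EuclideanSpace ℝ (Fin n))
    (hfconv : ∀ t ∈ Finset.Icc 1 T, ConvexOn ℝ Set.univ (f t))
    (hfgrad : ∀ t ∈ Finset.Icc 1 T, ∀ x, HasGradientAt (f t) (fgrad t x) x)
    (hfgradbd : ∀ t ∈ Finset.Icc 1 T, ∀ x ∈ X₀, ‖fgrad t x‖ ≤ 1)
    (g : EuclideanSpace ℝ (Fin n) → EuclideanSpace ℝ (Fin m))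
    (hgconv : ∀ i, ConvexOn ℝ Set.univ (fun x => g x i))
    (hgbd : ∀ x ∈ X₀, ‖g x‖ ≤ G₂)
    (hglip : ∀ x ∈ X₀, ∀ y ∈ X₀, ‖g x - g y‖ ≤ β * ‖x - y‖)
    (hγ : 0 < γ) (hε : 0 < ε)
    (xhat : EuclideanSpace ℝ (Fin n)) (hxhat : xhat ∈ X₀)
    (hslater : ∀ i, g xhat i ≤ -ε)
    (hη : 0 < η) (hα : (1 / 2) * (γ ^ 2 * β ^ 2 + η) ≤ α)
    -- the virtual-queue online algorithm
    (x : ℕ → EuclideanSpace ℝ (Fin n))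
    (Q : ℕ → Fin m → ℝ)
    (hx1 : x 1 ∈ X₀)
    (hQ0 : ∀ i, Q 0 i = 0)
    (hQ : ∀ t, 1 ≤ t → ∀ i,
      Q t i = max (-(γ * g (x t) i)) (Q (t - 1) i + γ * g (x t) i))
    (hxupd : ∀ t, 1 ≤ t → x (t + 1) ∈ X₀ ∧
      ∀ z ∈ X₀,
        ⟪fgrad t (x t), x (t + 1) - x t⟫
            + (∑ i, (Q t i + γ * g (x t) i) * (γ * g (x (t + 1)) i))
            + α * ‖x (t + 1) - x t‖ ^ 2 ≤
          ⟪fgrad t (x t), z - x t⟫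
            + (∑ i, (Q t i + γ * g (x t) i) * (γ * g z i))
            + α * ‖z - x t‖ ^ 2)
    :
    ∀ i, ∑ t ∈ Finset.Icc 1 T, g (x t) i ≤
      2 * G₂ + (α * G₁ ^ 2 + G₁) / (γ ^ 2 * ε) + 2 * G₂ ^ 2 / ε :=
  stmt3_general X₀ G₁ G₂ β γ ε α η hdiam T fgrad hfgradbd g hgbd hγ hε xhat hxhat hslater hη hα x Q
    hx1 hQ0 hQ hxupd
end

section
/- (Per-window regret bound, key step in the proof of Theorem 1.) Fix one window W_k of the partition, let t_k¹ denote its first slot, and let x*(k) ∈ X₀ satisfy g_i(x*(k)) ≤ 0 for all i. Let η > 0 and suppose α ≥ (1/2)(γ²β² + η). Then for every window with |W_k| ≥ 1, the iterates produced by running the virtual-queue algorithm along the slots of W_k satisfy Σ_{t ∈ W_k} f^t(x(t)) ≤ Σ_{t ∈ W_k} f^t(x*(k)) + α‖x*(k) − x(t_k¹)‖² + |W_k|/(2η). -/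
/-!
Drift-plus-penalty argument. Along the window write `x_j`, `Q_j` for the `j`-th iterate and queue,
and `P_j = α‖x* - x_j‖² + ½‖Q_j‖² - ½‖γ g(x_j)‖²`. Each step satisfies
`f_j(x_j) - f_j(x*) ≤ ⟪∇f_j(x_j), x_j - x*⟫ ≤ 1/(2η) + P_j - P_{j+1}`: the objective of the update
is convex plus `α‖· - x_j‖²`, hence `2α`-strongly convex, so its minimiser `x_{j+1}` beats the
feasible point `x*` by `α‖x* - x_{j+1}‖²`; the queue update raises `½‖Q‖²` by at most
`⟪Q_j, γ g(x_{j+1})⟫ + ‖γ g(x_{j+1})‖²`; the cross term `⟪γ g(x_j), γ g(x_{j+1})⟫` is handled by the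
Lipschitz bound and the linear term by `⟪v, w⟫ ≤ 1/(2η) + (η/2)‖w‖²`, and the leftover quadratic
terms are absorbed by `α ≥ (γ²β² + η)/2`. Since `Q_1 = |γ g(x_1)|` and `Q_N ≥ |γ g(x_N)|`,
telescoping leaves `P_1 = α‖x* - x_1‖²`.
-/

open RealInnerProductSpace Set Filter Topology

theorem sq_max_neg_add_le (q a : ℝ) : max (-a) (q + a) ^ 2 ≤ q ^ 2 + 2 * q * a + 2 * a ^ 2 := by
  rcases le_total (-a) (q + a) with h | h
  · rw [max_eq_right h]; nlinarith
  · rw [max_eq_left h]; nlinarith [sq_nonneg (q + a)]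

theorem abs_le_max_neg_add {q : ℝ} (hq : 0 ≤ q) (a : ℝ) : |a| ≤ max (-a) (q + a) :=
  abs_le'.2 ⟨(le_add_of_nonneg_left hq).trans (le_max_right _ _), le_max_left _ _⟩

theorem sum_Ico_le_of_le_add_sub {a P : ℕ → ℝ} {C : ℝ} {k : ℕ} (hk : 1 ≤ k)
    (h : ∀ j, 1 ≤ j → j < k → a j ≤ C + P j - P (j + 1)) :
    ∑ j ∈ Finset.Ico 1 k, a j ≤ (k - 1) * C + P 1 - P k := by
  induction k, hk using Nat.le_induction with
  | base => simp
  | succ k hk ih =>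
    rw [Finset.sum_Ico_succ_top hk]
    have := h k hk k.lt_succ_self
    have := ih fun j hj hjk ↦ h j hj (hjk.trans k.lt_succ_self)
    push_cast
    linarith

theorem sum_Icc_le_of_le_add_sub {a P : ℕ → ℝ} {C : ℝ} {N : ℕ} (hN : 1 ≤ N)
    (hstep : ∀ j, 1 ≤ j → j < N → a j ≤ C + P j - P (j + 1)) (hlast : a N ≤ C + P N) :
    ∑ j ∈ Finset.Icc 1 N, a j ≤ N * C + P 1 := by
  rw [← Finset.Ico_add_one_right_eq_Icc, Finset.sum_Ico_succ_top hN]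
  linarith [sum_Ico_le_of_le_add_sub hN hstep]

section Convex

variable {E : Type*} [AddCommGroup E] [Module ℝ E]

theorem convexOn_sum {ι : Type*} {s : Set E} (hs : Convex ℝ s) (t : Finset ι)
    {f : ι → E → ℝ} (hf : ∀ i ∈ t, ConvexOn ℝ s (f i)) :
    ConvexOn ℝ s fun x ↦ ∑ i ∈ t, f i x := by
  classical
  induction t using Finset.induction_on with
  | empty => simpa using convexOn_const 0 hs
  | insert i t hi ih =>
    simp_rw [Finset.sum_insert hi]
    exact (hf i (t.mem_insert_self i)).add (ih fun j hj ↦ hf j (Finset.mem_insert_of_mem hj))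

end Convex

section NormedSpace

variable {E : Type*} [NormedAddCommGroup E] [NormedSpace ℝ E]

theorem StrongConvexOn.add_le_of_isMinOn {s : Set E} {m : ℝ} {h : E → ℝ} {p z : E}
    (hh : StrongConvexOn s m h) (hmin : IsMinOn h s p) (hp : p ∈ s) (hz : z ∈ s) :
    h p + m / 2 * ‖z - p‖ ^ 2 ≤ h z := by
  have hτ : ∀ τ ∈ Ioc (0 : ℝ) 1, h p + (1 - τ) * (m / 2 * ‖z - p‖ ^ 2) ≤ h z := by
    rintro τ ⟨hτ₀, hτ₁⟩
    have hconv := hh.2 hp hz (sub_nonneg.2 hτ₁) hτ₀.le (by ring)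
    have hle := isMinOn_iff.1 hmin _ (hh.1 hp hz (sub_nonneg.2 hτ₁) hτ₀.le (by ring))
    simp only [smul_eq_mul, norm_sub_rev p z] at hconv hle
    refine le_of_mul_le_mul_left ?_ hτ₀
    linarith
  have hlim : Tendsto (fun τ : ℝ ↦ h p + (1 - τ) * (m / 2 * ‖z - p‖ ^ 2)) (𝓝[>] 0)
      (𝓝 (h p + m / 2 * ‖z - p‖ ^ 2)) := by
    have : Continuous fun τ : ℝ ↦ h p + (1 - τ) * (m / 2 * ‖z - p‖ ^ 2) := by fun_prop
    simpa using (this.tendsto 0).mono_left nhdsWithin_le_nhds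
  exact le_of_tendsto hlim (Filter.mem_of_superset (Ioc_mem_nhdsGT zero_lt_one) hτ)

end NormedSpace

section InnerProductSpace

variable {E : Type*} [NormedAddCommGroup E] [InnerProductSpace ℝ E]

theorem ConvexOn.add_inner_sub_le_of_hasGradientAt_s4 [CompleteSpace E] {s : Set E} {f : E → ℝ}
    {v x y : E} (hf : ConvexOn ℝ s f) (hx : x ∈ s) (hy : y ∈ s) (hv : HasGradientAt f v x) :
    f x + ⟪v, y - x⟫ ≤ f y := by
  let ℓ := AffineMap.lineMap (k := ℝ) x y
  have hconv : ConvexOn ℝ (ℓ ⁻¹' s) (f ∘ ℓ) := hf.comp_affineMap ℓ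
  have hderiv : HasDerivAt (f ∘ ℓ) ⟪v, y - x⟫ 0 := by
    have hℓ : HasDerivAt ℓ (y - x) 0 := AffineMap.hasDerivAt_lineMap
    simpa using hv.hasFDerivAt.comp_hasDerivAt_of_eq (0 : ℝ) hℓ (by simp [ℓ])
  have := hconv.le_slope_of_hasDerivAt (by simpa [ℓ] using hx) (by simpa [ℓ] using hy) one_pos
    hderiv
  simp only [slope, sub_zero, inv_one, Function.comp_apply, AffineMap.lineMap_apply_one,
    AffineMap.lineMap_apply_zero, vsub_eq_sub, smul_eq_mul, one_mul, ℓ] at this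
  linarith

theorem ConvexOn.strongConvexOn_add_mul_norm_sub_sq {s : Set E} {ψ : E → ℝ}
    (hψ : ConvexOn ℝ s ψ) (α : ℝ) (x₀ : E) :
    StrongConvexOn s (2 * α) fun z ↦ ψ z + α * ‖z - x₀‖ ^ 2 := by
  rw [strongConvexOn_iff_convex]
  have hlin := ((-(2 * α)) • innerₛₗ ℝ x₀).convexOn hψ.1
  refine ((hψ.add hlin).add_const (α * ‖x₀‖ ^ 2)).congr fun z _ ↦ ?_
  simp only [Pi.add_apply, LinearMap.smul_apply, coe_innerₛₗ_apply, smul_eq_mul,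
    norm_sub_sq_real, real_inner_comm]
  ring

theorem real_inner_le_inv_add_mul_norm_sq {v w : E} (hv : ‖v‖ ≤ 1) {η : ℝ} (hη : 0 < η) :
    ⟪v, w⟫ ≤ 1 / (2 * η) + η / 2 * ‖w‖ ^ 2 := by
  have hcs : ⟪v, w⟫ ≤ ‖w‖ :=
    (real_inner_le_norm v w).trans (mul_le_of_le_one_left (norm_nonneg w) hv)
  have hamgm : ‖w‖ ≤ 1 / (2 * η) + η / 2 * ‖w‖ ^ 2 := by
    rw [div_add' _ _ _ (by positivity), le_div_iff₀ (by positivity)]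
    nlinarith [sq_nonneg (η * ‖w‖ - 1)]
  exact hcs.trans hamgm

end InnerProductSpace

namespace VirtualQueue

theorem sum_sq_max_neg_add_le {ι : Type*} [Fintype ι] (Q a b : ι → ℝ) :
    (∑ i, max (-a i) (Q i + a i) ^ 2) / 2 - (∑ i, a i ^ 2) / 2 ≤
      (∑ i, Q i ^ 2) / 2 - (∑ i, b i ^ 2) / 2 + ∑ i, (Q i + b i) * a i
        + (∑ i, (a i - b i) ^ 2) / 2 := by
  have hpt : ∀ i, max (-a i) (Q i + a i) ^ 2 / 2 - a i ^ 2 / 2 ≤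
      Q i ^ 2 / 2 - b i ^ 2 / 2 + (Q i + b i) * a i + (a i - b i) ^ 2 / 2 := fun i ↦ by
    nlinarith [sq_max_neg_add_le (Q i) (a i)]
  have := Finset.sum_le_sum fun i (_ : i ∈ Finset.univ) ↦ hpt i
  simpa only [Finset.sum_add_distrib, Finset.sum_sub_distrib, Finset.sum_div] using this

theorem abs_le_of_update {ι : Type*} {a Q : ℕ → ι → ℝ} {N : ℕ} (hQ0 : ∀ i, Q 0 i = 0)
    (hQ : ∀ j, 1 ≤ j → j ≤ N → ∀ i, Q j i = max (-a j i) (Q (j - 1) i + a j i)) :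
    ∀ j, 1 ≤ j → j ≤ N → ∀ i, |a j i| ≤ Q j i := by
  have hnonneg : ∀ j ≤ N, ∀ i, 0 ≤ Q j i := by
    intro j
    induction j with
    | zero => exact fun _ i ↦ (hQ0 i).ge
    | succ j ih =>
      intro hj i
      rw [hQ (j + 1) (by omega) hj i]
      exact (abs_nonneg _).trans (abs_le_max_neg_add (ih (by omega) i) _)
  intro j hj1 hjN i
  rw [hQ j hj1 hjN i]
  exact abs_le_max_neg_add (hnonneg (j - 1) (by omega) i) _

variable {E : Type*} [NormedAddCommGroup E]
variable {m : ℕ} {X : Set E} {g : E → EuclideanSpace ℝ (Fin m)} {α β γ η : ℝ}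

noncomputable def potential (α γ : ℝ) (g : E → EuclideanSpace ℝ (Fin m)) (xs y : E)
    (Q : Fin m → ℝ) : ℝ :=
  α * ‖xs - y‖ ^ 2 + (∑ i, Q i ^ 2) / 2 - (∑ i, (γ * g y i) ^ 2) / 2

theorem le_potential {xs y : E} {Q : Fin m → ℝ} (hQ : ∀ i, |γ * g y i| ≤ Q i) :
    α * ‖xs - y‖ ^ 2 ≤ potential α γ g xs y Q := by
  have : ∑ i, (γ * g y i) ^ 2 ≤ ∑ i, Q i ^ 2 :=
    Finset.sum_le_sum fun i _ ↦ sq_le_sq' (neg_le_of_abs_le (hQ i)) (le_of_abs_le (hQ i))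
  unfold potential
  linarith

theorem potential_eq_of_eq_abs {xs y : E} {Q : Fin m → ℝ} (hQ : ∀ i, Q i = |γ * g y i|) :
    potential α γ g xs y Q = α * ‖xs - y‖ ^ 2 := by
  simp only [potential, hQ, sq_abs]
  ring

theorem sum_sq_mul_sub_le (hglip : ∀ x ∈ X, ∀ y ∈ X, ‖g x - g y‖ ≤ β * ‖x - y‖) {x y : E}
    (hx : x ∈ X) (hy : y ∈ X) :
    ∑ i, (γ * g x i - γ * g y i) ^ 2 ≤ γ ^ 2 * β ^ 2 * ‖x - y‖ ^ 2 :=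
  calc ∑ i, (γ * g x i - γ * g y i) ^ 2 = γ ^ 2 * ‖g x - g y‖ ^ 2 := by
        rw [EuclideanSpace.real_norm_sq_eq, Finset.mul_sum]
        exact Finset.sum_congr rfl fun i _ ↦ by simp only [PiLp.sub_apply]; ring
    _ ≤ γ ^ 2 * (β * ‖x - y‖) ^ 2 := by gcongr; exact hglip x hx y hy
    _ = γ ^ 2 * β ^ 2 * ‖x - y‖ ^ 2 := by ring

variable [InnerProductSpace ℝ E]

theorem step_descent (hX : Convex ℝ X) (hgconv : ∀ i, ConvexOn ℝ X fun z ↦ g z i)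
    (hγ : 0 ≤ γ) {c : Fin m → ℝ} (hc : ∀ i, 0 ≤ c i) {v xc xn xs : E} (hxn : xn ∈ X)
    (hxs : xs ∈ X) (hfeas : ∀ i, g xs i ≤ 0)
    (hmin : ∀ z ∈ X, ⟪v, xn - xc⟫ + ∑ i, c i * (γ * g xn i) + α * ‖xn - xc‖ ^ 2 ≤
      ⟪v, z - xc⟫ + ∑ i, c i * (γ * g z i) + α * ‖z - xc‖ ^ 2) :
    ⟪v, xn - xc⟫ + ∑ i, c i * (γ * g xn i) + α * ‖xn - xc‖ ^ 2 + α * ‖xs - xn‖ ^ 2 ≤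
      ⟪v, xs - xc⟫ + α * ‖xs - xc‖ ^ 2 := by
  have hlin : ConvexOn ℝ X fun z ↦ ⟪v, z - xc⟫ :=
    (((innerₛₗ ℝ v).convexOn hX).add_const (-⟪v, xc⟫)).congr fun z _ ↦ by
      rw [inner_sub_right, sub_eq_add_neg]; rfl
  have hpen : ConvexOn ℝ X fun z ↦ ∑ i, c i * (γ * g z i) :=
    convexOn_sum hX _ fun i _ ↦ ((hgconv i).smul (mul_nonneg (hc i) hγ)).congr
      fun z _ ↦ by simp only [smul_eq_mul]; ring
  have hquad := ((hlin.add hpen).strongConvexOn_add_mul_norm_sub_sq α xc).add_le_of_isMinOn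
    (isMinOn_iff.2 fun z hz ↦ by simpa only [Pi.add_apply, add_assoc] using hmin z hz) hxn hxs
  have hpen_xs : ∑ i, c i * (γ * g xs i) ≤ 0 :=
    Finset.sum_nonpos fun i _ ↦ mul_nonpos_of_nonneg_of_nonpos (hc i)
      (mul_nonpos_of_nonneg_of_nonpos hγ (hfeas i))
  simp only [Pi.add_apply] at hquad
  linarith

theorem inner_sub_le_potential_sub (hX : Convex ℝ X) (hgconv : ∀ i, ConvexOn ℝ X fun z ↦ g z i)
    (hγ : 0 ≤ γ) (hglip : ∀ x ∈ X, ∀ y ∈ X, ‖g x - g y‖ ≤ β * ‖x - y‖) (hη : 0 < η)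
    (hα : (1 / 2) * (γ ^ 2 * β ^ 2 + η) ≤ α) {v xc xn xs : E} {Q Q' : Fin m → ℝ}
    (hv : ‖v‖ ≤ 1) (hxc : xc ∈ X) (hxs : xs ∈ X) (hfeas : ∀ i, g xs i ≤ 0)
    (hQ : ∀ i, |γ * g xc i| ≤ Q i) (hxn : xn ∈ X)
    (hmin : ∀ z ∈ X,
      ⟪v, xn - xc⟫ + ∑ i, (Q i + γ * g xc i) * (γ * g xn i) + α * ‖xn - xc‖ ^ 2 ≤
        ⟪v, z - xc⟫ + ∑ i, (Q i + γ * g xc i) * (γ * g z i) + α * ‖z - xc‖ ^ 2)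
    (hQ' : ∀ i, Q' i = max (-(γ * g xn i)) (Q i + γ * g xn i)) :
    ⟪v, xc - xs⟫ ≤ 1 / (2 * η) + potential α γ g xs xc Q - potential α γ g xs xn Q' := by
  have hdescent := step_descent (c := fun i ↦ Q i + γ * g xc i) hX hgconv hγ
    (fun i ↦ by linarith [neg_abs_le (γ * g xc i), hQ i]) hxn hxs hfeas hmin
  have hqueue := sum_sq_max_neg_add_le Q (fun i ↦ γ * g xn i) (fun i ↦ γ * g xc i)
  simp only [← hQ'] at hqueue
  have hlip := sum_sq_mul_sub_le (γ := γ) hglip hxn hxc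
  have hlin := real_inner_le_inv_add_mul_norm_sq (w := xc - xn) hv hη
  have hcoef : (η / 2 + γ ^ 2 * β ^ 2 / 2 - α) * ‖xn - xc‖ ^ 2 ≤ 0 :=
    mul_nonpos_of_nonpos_of_nonneg (by linarith) (sq_nonneg _)
  rw [norm_sub_rev] at hlin
  simp only [inner_sub_right] at hdescent hlin ⊢
  unfold potential
  linarith

variable [CompleteSpace E]

theorem regret_le (hX : Convex ℝ X) (hgconv : ∀ i, ConvexOn ℝ X fun z ↦ g z i) (hγ : 0 ≤ γ)
    (hglip : ∀ x ∈ X, ∀ y ∈ X, ‖g x - g y‖ ≤ β * ‖x - y‖) (hη : 0 < η)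
    (hα : (1 / 2) * (γ ^ 2 * β ^ 2 + η) ≤ α) {N : ℕ} {F : ℕ → E → ℝ} {G : ℕ → E → E}
    (hF : ∀ j ∈ Finset.Icc 1 N, ConvexOn ℝ X (F j))
    (hG : ∀ j ∈ Finset.Icc 1 N, ∀ x ∈ X, HasGradientAt (F j) (G j x) x)
    (hGbd : ∀ j ∈ Finset.Icc 1 N, ∀ x ∈ X, ‖G j x‖ ≤ 1)
    {y : ℕ → E} {Q : ℕ → Fin m → ℝ} (hy1 : y 1 ∈ X) (hQ0 : ∀ i, Q 0 i = 0)
    (hQ : ∀ j, 1 ≤ j → j ≤ N → ∀ i,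
      Q j i = max (-(γ * g (y j) i)) (Q (j - 1) i + γ * g (y j) i))
    (hy : ∀ j, 1 ≤ j → j + 1 ≤ N → y (j + 1) ∈ X ∧ ∀ z ∈ X,
      ⟪G j (y j), y (j + 1) - y j⟫ + (∑ i, (Q j i + γ * g (y j) i) * (γ * g (y (j + 1)) i))
          + α * ‖y (j + 1) - y j‖ ^ 2 ≤
        ⟪G j (y j), z - y j⟫ + (∑ i, (Q j i + γ * g (y j) i) * (γ * g z i))
          + α * ‖z - y j‖ ^ 2)
    {xs : E} (hxs : xs ∈ X) (hfeas : ∀ i, g xs i ≤ 0) :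
    ∑ j ∈ Finset.Icc 1 N, F j (y j) ≤
      ∑ j ∈ Finset.Icc 1 N, F j xs + α * ‖xs - y 1‖ ^ 2 + N / (2 * η) := by
  have hα₀ : 0 ≤ α := by nlinarith [sq_nonneg (γ * β)]
  rcases Nat.eq_zero_or_pos N with rfl | hN
  · simp only [Finset.Icc_eq_empty_of_lt one_pos, Finset.sum_empty, CharP.cast_eq_zero]
    positivity
  have hyX : ∀ j, 1 ≤ j → j ≤ N → y j ∈ X := by
    intro j hj1 hjN
    obtain rfl | ⟨k, hk, rfl⟩ : j = 1 ∨ ∃ k, 1 ≤ k ∧ j = k + 1 :=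
      hj1.eq_or_lt.imp Eq.symm fun h ↦ ⟨j - 1, by omega, by omega⟩
    exacts [hy1, (hy k hk hjN).1]
  have hQabs : ∀ j, 1 ≤ j → j ≤ N → ∀ i, |γ * g (y j) i| ≤ Q j i :=
    abs_le_of_update (a := fun j i ↦ γ * g (y j) i) hQ0 hQ
  have hlin : ∀ j, 1 ≤ j → j ≤ N → F j (y j) - F j xs ≤ ⟪G j (y j), y j - xs⟫ := by
    intro j hj1 hjN
    have hj : j ∈ Finset.Icc 1 N := Finset.mem_Icc.2 ⟨hj1, hjN⟩
    have := (hF j hj).add_inner_sub_le_of_hasGradientAt_s4 (hyX j hj1 hjN) hxs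
      (hG j hj _ (hyX j hj1 hjN))
    rw [← neg_sub xs (y j), inner_neg_right]
    linarith
  set P := fun j ↦ potential α γ g xs (y j) (Q j)
  have hstep : ∀ j, 1 ≤ j → j < N → F j (y j) - F j xs ≤ 1 / (2 * η) + P j - P (j + 1) :=
    fun j hj1 hjN ↦ (hlin j hj1 hjN.le).trans <| inner_sub_le_potential_sub hX hgconv hγ hglip
      hη hα (hGbd j (Finset.mem_Icc.2 ⟨hj1, hjN.le⟩) _ (hyX j hj1 hjN.le)) (hyX j hj1 hjN.le)
      hxs hfeas (hQabs j hj1 hjN.le) (hy j hj1 hjN).1 (hy j hj1 hjN).2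
      (by simpa using hQ (j + 1) (by omega) hjN)
  have hlast : F N (y N) - F N xs ≤ 1 / (2 * η) + P N := by
    have := real_inner_le_inv_add_mul_norm_sq (w := y N - xs)
      (hGbd N (Finset.mem_Icc.2 ⟨hN, le_rfl⟩) _ (hyX N hN le_rfl)) hη
    have := le_potential (α := α) (xs := xs) (hQabs N hN le_rfl)
    have : η / 2 * ‖y N - xs‖ ^ 2 ≤ α * ‖xs - y N‖ ^ 2 := by
      rw [norm_sub_rev]; gcongr; linarith [sq_nonneg (γ * β)]
    linarith [hlin N hN le_rfl]
  have hP1 : P 1 = α * ‖xs - y 1‖ ^ 2 := potential_eq_of_eq_abs fun i ↦ by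
    simp [hQ 1 le_rfl hN i, hQ0, abs_eq_max_neg, max_comm]
  have htel := sum_Icc_le_of_le_add_sub hN hstep hlast
  rw [Finset.sum_sub_distrib, hP1, mul_one_div] at htel
  linarith

end VirtualQueue

theorem stmt4_general {n m : ℕ}
    (X₀ : Set (EuclideanSpace ℝ (Fin n)))
    (hconv : Convex ℝ X₀)
    (β γ α η : ℝ)
    (T : ℕ)
    (f : ℕ → EuclideanSpace ℝ (Fin n) → ℝ)
    (fgrad : ℕ → EuclideanSpace ℝ (Fin n) → EuclideanSpace ℝ (Fin n))
    (hfconv : ∀ t ∈ Finset.Icc 1 T, ConvexOn ℝ Set.univ (f t))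
    (hfgrad : ∀ t ∈ Finset.Icc 1 T, ∀ x, HasGradientAt (f t) (fgrad t x) x)
    (hfgradbd : ∀ t ∈ Finset.Icc 1 T, ∀ x ∈ X₀, ‖fgrad t x‖ ≤ 1)
    (g : EuclideanSpace ℝ (Fin n) → EuclideanSpace ℝ (Fin m))
    (hgconv : ∀ i, ConvexOn ℝ Set.univ (fun x => g x i))
    (hglip : ∀ x ∈ X₀, ∀ y ∈ X₀, ‖g x - g y‖ ≤ β * ‖x - y‖)
    (hγ : 0 < γ)
    (hη : 0 < η) (hα : (1 / 2) * (γ ^ 2 * β ^ 2 + η) ≤ α)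
    -- one window `W` of the partition, with slots enumerated in increasing
    -- order by `s : {1, …, |W|} → W`
    (W : Finset ℕ) (hW : W ⊆ Finset.Icc 1 T)
    (s : ℕ → ℕ)
    (hsmono : StrictMonoOn s (Set.Icc 1 W.card))
    (hsimg : W = (Finset.Icc 1 W.card).image s)
    -- the virtual-queue algorithm run along the slots of `W` (queues reset to 0
    -- at the start of the window; `Q j` is the queue after position `j`)
    (x : ℕ → EuclideanSpace ℝ (Fin n))
    (Q : ℕ → Fin m → ℝ)
    (hx1 : x (s 1) ∈ X₀)
    (hQ0 : ∀ i, Q 0 i = 0)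
    (hQ : ∀ j, 1 ≤ j → j ≤ W.card → ∀ i,
      Q j i = max (-(γ * g (x (s j)) i)) (Q (j - 1) i + γ * g (x (s j)) i))
    (hxupd : ∀ j, 1 ≤ j → j + 1 ≤ W.card → x (s (j + 1)) ∈ X₀ ∧
      ∀ z ∈ X₀,
        ⟪fgrad (s j) (x (s j)), x (s (j + 1)) - x (s j)⟫
            + (∑ i, (Q j i + γ * g (x (s j)) i) * (γ * g (x (s (j + 1))) i))
            + α * ‖x (s (j + 1)) - x (s j)‖ ^ 2 ≤
          ⟪fgrad (s j) (x (s j)), z - x (s j)⟫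
            + (∑ i, (Q j i + γ * g (x (s j)) i) * (γ * g z i))
            + α * ‖z - x (s j)‖ ^ 2)
    -- any fixed feasible point `x*(k)`
    (xs : EuclideanSpace ℝ (Fin n)) (hxs : xs ∈ X₀)
    (hfeas : ∀ i, g xs i ≤ 0) :
    ∑ t ∈ W, f t (x t) ≤
      ∑ t ∈ W, f t xs + α * ‖xs - x (s 1)‖ ^ 2 + W.card / (2 * η) := by
  have hslot : ∀ j ∈ Finset.Icc 1 W.card, s j ∈ Finset.Icc 1 T :=
    fun j hj ↦ hW (hsimg ▸ Finset.mem_image_of_mem s hj)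
  have hreindex : ∀ F : ℕ → ℝ, ∑ t ∈ W, F t = ∑ j ∈ Finset.Icc 1 W.card, F (s j) := by
    intro F
    conv_lhs => rw [hsimg]
    exact Finset.sum_image fun a ha b hb hab ↦
      hsmono.injOn (by simpa using ha) (by simpa using hb) hab
  rw [hreindex, hreindex]
  exact VirtualQueue.regret_le hconv (fun i ↦ (hgconv i).subset (subset_univ _) hconv) hγ.le
    hglip hη hα (fun j hj ↦ (hfconv _ (hslot j hj)).subset (subset_univ _) hconv)
    (fun j hj x _ ↦ hfgrad _ (hslot j hj) x) (fun j hj ↦ hfgradbd _ (hslot j hj)) hx1 hQ0 hQ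
    hxupd hxs hfeas

/-- Per-window regret bound (key step in the proof of Theorem 1): fix one window
`W` of the partition of `{1,…,T}`, with slots listed in increasing order as
`s 1 < s 2 < … < s |W|` (so `t_k¹ = s 1`), and let `x*(k) ∈ X₀` be feasible
(`g_i(x*(k)) ≤ 0` for all `i`). If `α ≥ (1/2)(γ²β² + η)`, then the iterates of
the virtual-queue algorithm run along the slots of `W` satisfy
`Σ_{t ∈ W} f^t(x(t)) ≤ Σ_{t ∈ W} f^t(x*(k)) + α‖x*(k) − x(t_k¹)‖² + |W|/(2η)`. -/
theorem stmt4 {n m : ℕ}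
    (X₀ : Set (EuclideanSpace ℝ (Fin n))) (hne : X₀.Nonempty)
    (hcomp : IsCompact X₀) (hconv : Convex ℝ X₀)
    (G₁ G₂ β γ ε α η : ℝ) (hG₁ : 0 < G₁)
    (hdiam : ∀ x ∈ X₀, ∀ y ∈ X₀, ‖x - y‖ ≤ G₁)
    (T : ℕ) (hT : 1 ≤ T)
    (f : ℕ → EuclideanSpace ℝ (Fin n) → ℝ)
    (fgrad : ℕ → EuclideanSpace ℝ (Fin n) → EuclideanSpace ℝ (Fin n))
    (hfconv : ∀ t ∈ Finset.Icc 1 T, ConvexOn ℝ Set.univ (f t))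
    (hfgrad : ∀ t ∈ Finset.Icc 1 T, ∀ x, HasGradientAt (f t) (fgrad t x) x)
    (hfgradbd : ∀ t ∈ Finset.Icc 1 T, ∀ x ∈ X₀, ‖fgrad t x‖ ≤ 1)
    (g : EuclideanSpace ℝ (Fin n) → EuclideanSpace ℝ (Fin m))
    (hgconv : ∀ i, ConvexOn ℝ Set.univ (fun x => g x i))
    (hgbd : ∀ x ∈ X₀, ‖g x‖ ≤ G₂)
    (hglip : ∀ x ∈ X₀, ∀ y ∈ X₀, ‖g x - g y‖ ≤ β * ‖x - y‖)
    (hγ : 0 < γ) (hε : 0 < ε)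
    (xhat : EuclideanSpace ℝ (Fin n)) (hxhat : xhat ∈ X₀)
    (hslater : ∀ i, g xhat i ≤ -ε)
    (hη : 0 < η) (hα : (1 / 2) * (γ ^ 2 * β ^ 2 + η) ≤ α)
    -- one window `W` of the partition, with slots enumerated in increasing
    -- order by `s : {1, …, |W|} → W`
    (W : Finset ℕ) (hW : W ⊆ Finset.Icc 1 T) (hWne : W.Nonempty)
    (s : ℕ → ℕ)
    (hsmono : StrictMonoOn s (Set.Icc 1 W.card))
    (hsimg : W = (Finset.Icc 1 W.card).image s)
    -- the virtual-queue algorithm run along the slots of `W` (queues reset to 0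
    -- at the start of the window; `Q j` is the queue after position `j`)
    (x : ℕ → EuclideanSpace ℝ (Fin n))
    (Q : ℕ → Fin m → ℝ)
    (hx1 : x (s 1) ∈ X₀)
    (hQ0 : ∀ i, Q 0 i = 0)
    (hQ : ∀ j, 1 ≤ j → j ≤ W.card → ∀ i,
      Q j i = max (-(γ * g (x (s j)) i)) (Q (j - 1) i + γ * g (x (s j)) i))
    (hxupd : ∀ j, 1 ≤ j → j + 1 ≤ W.card → x (s (j + 1)) ∈ X₀ ∧
      ∀ z ∈ X₀,
        ⟪fgrad (s j) (x (s j)), x (s (j + 1)) - x (s j)⟫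
            + (∑ i, (Q j i + γ * g (x (s j)) i) * (γ * g (x (s (j + 1))) i))
            + α * ‖x (s (j + 1)) - x (s j)‖ ^ 2 ≤
          ⟪fgrad (s j) (x (s j)), z - x (s j)⟫
            + (∑ i, (Q j i + γ * g (x (s j)) i) * (γ * g z i))
            + α * ‖z - x (s j)‖ ^ 2)
    -- any fixed feasible point `x*(k)`
    (xs : EuclideanSpace ℝ (Fin n)) (hxs : xs ∈ X₀)
    (hfeas : ∀ i, g xs i ≤ 0) :
    ∑ t ∈ W, f t (x t) ≤
      ∑ t ∈ W, f t xs + α * ‖xs - x (s 1)‖ ^ 2 + W.card / (2 * η) :=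
  stmt4_general X₀ hconv β γ α η T f fgrad hfconv hfgrad hfgradbd g hgconv hglip hγ hη hα W hW s
    hsmono hsimg x Q hx1 hQ0 hQ hxupd xs hxs hfeas
end

section
/- (Per-window constraint violation bound, key step in the proof of Theorem 1.) Fix one window W_k of the partition. Let η > 0 and suppose α ≥ (1/2)(γ²β² + η). Then for every constraint index i ∈ {1,…,m}, the iterates produced by running the virtual-queue algorithm along the slots of W_k satisfy Σ_{t ∈ W_k} g_i(x(t)) ≤ 2G₂ + (αG₁² + G₁)/(γ²ε) + 2G₂²/ε; in particular this bound does not depend on the window length |W_k|. -/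
/-!
The proof is a Lyapunov drift argument on the squared norm of the virtual-queue vector `Q`.
Comparing the proximal step with the Slater point `x̂` and using the Lipschitz bound on `g`
to absorb the cross terms into `α ‖x(t+1) - x(t)‖²` gives
`‖Q_{j+1}‖² ≤ ‖Q_j‖² + 2 (C - γ ε ‖Q_j‖)` with `C = α G₁² + G₁ + (3/2) γ² G₂²`.
So `‖Q‖` decreases once it exceeds `C / (γ ε)`, while one step raises it by at most `2 γ G₂`;
hence `‖Q_j‖ ≤ C / (γ ε) + 2 γ G₂` throughout the window. Since the update
`Q_i ← max (-g̃_i) (Q_i + g̃_i)` dominates `Q_i + g̃_i`, the queue dominates the accumulated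
constraint values `γ Σ g_i(x(t))`.
-/

open RealInnerProductSpace Finset

theorem nonneg_of_queue_update {Q b : ℕ → ℝ} {N : ℕ} (h0 : 0 ≤ Q 0)
    (h : ∀ j, 1 ≤ j → j ≤ N → Q j = max (-b j) (Q (j - 1) + b j)) : ∀ j ≤ N, 0 ≤ Q j := by
  intro j
  induction j with
  | zero => intro _; exact h0
  | succ j ih =>
    intro hj
    rw [h (j + 1) (by omega) hj, Nat.add_sub_cancel]
    rcases le_total (b (j + 1)) 0 with hb | hb
    · exact le_max_of_le_left (by linarith)
    · exact le_max_of_le_right (by linarith [ih (by omega)])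

theorem sum_Icc_le_sub_of_le_add {Q b : ℕ → ℝ} {N : ℕ}
    (h : ∀ j, 1 ≤ j → j ≤ N → Q (j - 1) + b j ≤ Q j) : ∑ j ∈ Icc 1 N, b j ≤ Q N - Q 0 := by
  induction N with
  | zero => simp
  | succ N ih =>
    rw [sum_Icc_succ_top (by omega)]
    have hlast := h (N + 1) (by omega) le_rfl
    rw [Nat.add_sub_cancel] at hlast
    linarith [ih fun j hj hjN => h j hj (by omega)]

theorem le_of_drift {r : ℕ → ℝ} {N : ℕ} {C ε G : ℝ} (hε : 0 < ε) (hG : 0 ≤ G)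
    (hr : ∀ j, 0 ≤ r j) (h0 : r 0 ≤ C / ε) (hinc : ∀ j < N, r (j + 1) ≤ r j + G)
    (hdrift : ∀ j, 1 ≤ j → j < N → r (j + 1) ^ 2 ≤ r j ^ 2 + 2 * (C - ε * r j)) :
    ∀ j ≤ N, r j ≤ C / ε + G := by
  intro j
  induction j with
  | zero => intro _; linarith
  | succ j ih =>
    intro hj
    have hrj := ih (by omega)
    by_cases hlarge : 1 ≤ j ∧ C / ε ≤ r j
    · have hC : C - ε * r j ≤ 0 := by
        have := (div_le_iff₀' hε).1 hlarge.2
        linarith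
      refine le_of_pow_le_pow_left₀ two_ne_zero ((hr j).trans hrj) ?_
      nlinarith [hdrift j hlarge.1 hj, hr j]
    · have hsmall : r j ≤ C / ε := by
        rcases Nat.eq_zero_or_pos j with rfl | hpos
        · exact h0
        · exact le_of_lt (not_le.1 fun h => hlarge ⟨hpos, h⟩)
      linarith [hinc j hj]

theorem add_le_of_linearized_min {E : Type*} [NormedAddCommGroup E] [InnerProductSpace ℝ E]
    {F x x' z : E} {P P' α R : ℝ}
    (hmin : ⟪F, x' - x⟫ + P' + α * ‖x' - x‖ ^ 2 ≤ ⟪F, z - x⟫ + P + α * ‖z - x‖ ^ 2)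
    (hF : ‖F‖ ≤ 1) (hz' : ‖z - x'‖ ≤ R) (hz : ‖z - x‖ ≤ R) (hα : 0 ≤ α) :
    P' + α * ‖x' - x‖ ^ 2 ≤ α * R ^ 2 + R + P := by
  have hlin : ⟪F, z - x⟫ - ⟪F, x' - x⟫ ≤ R := by
    rw [← inner_sub_right, sub_sub_sub_cancel_right]
    exact (real_inner_le_norm F _).trans
      (by nlinarith [norm_nonneg F, norm_nonneg (z - x')])
  have hquad : α * ‖z - x‖ ^ 2 ≤ α * R ^ 2 := by gcongr
  linarith

section EuclideanSpace

variable {ι : Type*} [Fintype ι]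

theorem EuclideanSpace.real_inner_eq_sum_mul (u v : EuclideanSpace ℝ ι) :
    ⟪u, v⟫ = ∑ i, u i * v i := by
  simp [PiLp.inner_apply, mul_comm]

theorem EuclideanSpace.norm_le_sum_of_nonneg_s5 {q : EuclideanSpace ℝ ι} (hq : ∀ i, 0 ≤ q i) :
    ‖q‖ ≤ ∑ i, q i := by
  have hsum : 0 ≤ ∑ i, q i := sum_nonneg fun i _ => hq i
  rw [← sq_le_sq₀ (norm_nonneg _) hsum, EuclideanSpace.real_norm_sq_eq]
  exact sum_sq_le_sq_sum_of_nonneg fun i _ => hq i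

theorem inner_le_neg_mul_norm_of_nonneg {q w : EuclideanSpace ℝ ι} {ε : ℝ}
    (hq : ∀ i, 0 ≤ q i) (hw : ∀ i, w i ≤ -ε) (hε : 0 ≤ ε) : ⟪q, w⟫ ≤ -ε * ‖q‖ := by
  calc ⟪q, w⟫ = ∑ i, q i * w i := EuclideanSpace.real_inner_eq_sum_mul q w
    _ ≤ ∑ i, q i * -ε := sum_le_sum fun i _ => mul_le_mul_of_nonneg_left (hw i) (hq i)
    _ = -ε * ∑ i, q i := by rw [mul_sum]; simp only [mul_comm]
    _ ≤ -ε * ‖q‖ := mul_le_mul_of_nonpos_left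
        (EuclideanSpace.norm_le_sum_of_nonneg_s5 hq) (neg_nonpos.2 hε)

theorem norm_sq_le_of_queue_update {q q' b : EuclideanSpace ℝ ι}
    (hq' : ∀ i, q' i = max (-b i) (q i + b i)) : ‖q'‖ ^ 2 ≤ ‖q + b‖ ^ 2 + ‖b‖ ^ 2 := by
  simp only [EuclideanSpace.real_norm_sq_eq, ← sum_add_distrib, hq', PiLp.add_apply]
  refine sum_le_sum fun i _ => ?_
  rcases max_choice (-b i) (q i + b i) with h | h <;> rw [h] <;> nlinarith

theorem norm_le_of_queue_update {q q' b : EuclideanSpace ℝ ι}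
    (hq' : ∀ i, q' i = max (-b i) (q i + b i)) : ‖q'‖ ≤ ‖q‖ + 2 * ‖b‖ := by
  refine le_of_pow_le_pow_left₀ two_ne_zero (by positivity) ?_
  calc ‖q'‖ ^ 2 ≤ ‖q + b‖ ^ 2 + ‖b‖ ^ 2 := norm_sq_le_of_queue_update hq'
    _ ≤ (‖q‖ + ‖b‖) ^ 2 + ‖b‖ ^ 2 := by gcongr; exact norm_add_le q b
    _ ≤ (‖q‖ + 2 * ‖b‖) ^ 2 := by nlinarith [norm_nonneg q, norm_nonneg b]

theorem norm_sq_le_drift_of_queue_update {q q' a b w : EuclideanSpace ℝ ι}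
    {α ε G L D K : ℝ} (hq : ∀ i, 0 ≤ q i) (hq' : ∀ i, q' i = max (-b i) (q i + b i))
    (hstep : ⟪q + a, b⟫ + α * D ^ 2 ≤ K + ⟪q + a, w⟫)
    (hw : ∀ i, w i ≤ -ε) (hε : 0 ≤ ε) (ha : ‖a‖ ≤ G) (hb : ‖b‖ ≤ G) (hwG : ‖w‖ ≤ G)
    (hba : ‖b - a‖ ≤ L * D) (hL : L ^ 2 ≤ 2 * α) :
    ‖q'‖ ^ 2 ≤ ‖q‖ ^ 2 + 2 * (K + 3 / 2 * G ^ 2 - ε * ‖q‖) := by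
  have hqw : ⟪q, w⟫ ≤ -ε * ‖q‖ := inner_le_neg_mul_norm_of_nonneg hq hw hε
  have haw : ⟪a, w⟫ ≤ G ^ 2 := (real_inner_le_norm a w).trans (by
    nlinarith [norm_nonneg a, norm_nonneg w])
  have hbab : ⟪b - a, b⟫ ≤ α * D ^ 2 + G ^ 2 / 2 := (real_inner_le_norm _ _).trans (by
    nlinarith [norm_nonneg (b - a), norm_nonneg b, sq_nonneg (‖b - a‖ - ‖b‖)])
  calc ‖q'‖ ^ 2 ≤ ‖q + b‖ ^ 2 + ‖b‖ ^ 2 := norm_sq_le_of_queue_update hq'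
    _ = ‖q‖ ^ 2 + 2 * ⟪q + a, b⟫ + 2 * ⟪b - a, b⟫ := by
      rw [norm_add_sq_real, ← real_inner_self_eq_norm_sq b]
      simp only [inner_add_left, inner_sub_left]
      ring
    _ ≤ ‖q‖ ^ 2 + 2 * (K + 3 / 2 * G ^ 2 - ε * ‖q‖) := by
      simp only [inner_add_left] at hstep ⊢
      linarith

theorem norm_sq_le_drift_of_linearized_min {E : Type*} [NormedAddCommGroup E]
    [InnerProductSpace ℝ E] {g : E → EuclideanSpace ℝ ι} {F x x' z : E}
    {q q' : EuclideanSpace ℝ ι} {α β γ ε R G : ℝ} (hq : ∀ i, 0 ≤ q i)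
    (hq' : ∀ i, q' i = max (-(γ • g x') i) (q i + (γ • g x') i))
    (hmin : ⟪F, x' - x⟫ + ⟪q + γ • g x, γ • g x'⟫ + α * ‖x' - x‖ ^ 2 ≤
      ⟪F, z - x⟫ + ⟪q + γ • g x, γ • g z⟫ + α * ‖z - x‖ ^ 2)
    (hF : ‖F‖ ≤ 1) (hz' : ‖z - x'‖ ≤ R) (hz : ‖z - x‖ ≤ R)
    (hslater : ∀ i, g z i ≤ -ε) (hε : 0 ≤ ε)
    (hgx : ‖g x‖ ≤ G) (hgx' : ‖g x'‖ ≤ G) (hgz : ‖g z‖ ≤ G)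
    (hlip : ‖g x' - g x‖ ≤ β * ‖x' - x‖) (hγ : 0 ≤ γ) (hα : (γ * β) ^ 2 ≤ 2 * α) :
    ‖q'‖ ^ 2 ≤ ‖q‖ ^ 2 + 2 * (α * R ^ 2 + R + 3 / 2 * (γ * G) ^ 2 - γ * ε * ‖q‖) := by
  have hnorm {y : E} (hy : ‖g y‖ ≤ G) : ‖γ • g y‖ ≤ γ * G := by
    rw [norm_smul, Real.norm_of_nonneg hγ]
    exact mul_le_mul_of_nonneg_left hy hγ
  refine norm_sq_le_drift_of_queue_update hq hq'
    (add_le_of_linearized_min hmin hF hz' hz (by nlinarith [sq_nonneg (γ * β)]))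
    (fun i => ?_) (mul_nonneg hγ hε) (hnorm hgx) (hnorm hgx') (hnorm hgz) ?_ hα
  · simpa [mul_neg] using mul_le_mul_of_nonneg_left (hslater i) hγ
  · rw [← smul_sub, norm_smul, Real.norm_of_nonneg hγ, mul_assoc]
    exact mul_le_mul_of_nonneg_left hlip hγ

theorem sum_le_of_queue_drift {q b : ℕ → EuclideanSpace ℝ ι} {N : ℕ} {C ε G : ℝ}
    (hε : 0 < ε) (hC : 0 ≤ C) (hG : 0 ≤ G) (hq0 : q 0 = 0)
    (hq : ∀ j, 1 ≤ j → j ≤ N → ∀ i, q j i = max (-b j i) (q (j - 1) i + b j i))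
    (hb : ∀ j, 1 ≤ j → j ≤ N → ‖b j‖ ≤ G)
    (hdrift : ∀ j, 1 ≤ j → j < N → ‖q (j + 1)‖ ^ 2 ≤ ‖q j‖ ^ 2 + 2 * (C - ε * ‖q j‖))
    (i : ι) : ∑ j ∈ Icc 1 N, b j i ≤ C / ε + 2 * G := by
  have hnorm : ‖q N‖ ≤ C / ε + 2 * G := by
    refine le_of_drift hε (by positivity) (fun _ => norm_nonneg _)
      (by rw [hq0, norm_zero]; positivity) (fun j hj => ?_) hdrift N le_rfl
    have hupd := norm_le_of_queue_update (hq (j + 1) (by omega) hj)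
    rw [Nat.add_sub_cancel] at hupd
    linarith [hb (j + 1) (by omega) hj]
  calc ∑ j ∈ Icc 1 N, b j i ≤ q N i - q 0 i :=
        sum_Icc_le_sub_of_le_add fun j hj hjN => (hq j hj hjN i).ge.trans' (le_max_right _ _)
    _ ≤ ‖q N‖ := by simpa [hq0] using (Real.le_norm_self _).trans (PiLp.norm_apply_le _ _)
    _ ≤ C / ε + 2 * G := hnorm

theorem sum_le_of_virtual_queue_run {E : Type*} [NormedAddCommGroup E] [InnerProductSpace ℝ E]
    {X₀ : Set E} {g : E → EuclideanSpace ℝ ι} {y F : ℕ → E} {q : ℕ → EuclideanSpace ℝ ι}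
    {N : ℕ} {z : E} {α β γ ε R G : ℝ} (hγ : 0 < γ) (hε : 0 < ε) (hα : (γ * β) ^ 2 ≤ 2 * α)
    (hdiam : ∀ x ∈ X₀, ∀ x' ∈ X₀, ‖x - x'‖ ≤ R) (hgbd : ∀ x ∈ X₀, ‖g x‖ ≤ G)
    (hlip : ∀ x ∈ X₀, ∀ x' ∈ X₀, ‖g x - g x'‖ ≤ β * ‖x - x'‖)
    (hz : z ∈ X₀) (hslater : ∀ i, g z i ≤ -ε)
    (hy : ∀ j, 1 ≤ j → j ≤ N → y j ∈ X₀) (hF : ∀ j, 1 ≤ j → j < N → ‖F j‖ ≤ 1)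
    (hq0 : q 0 = 0)
    (hq : ∀ j, 1 ≤ j → j ≤ N → ∀ i,
      q j i = max (-(γ • g (y j)) i) (q (j - 1) i + (γ • g (y j)) i))
    (hmin : ∀ j, 1 ≤ j → j < N →
      ⟪F j, y (j + 1) - y j⟫ + ⟪q j + γ • g (y j), γ • g (y (j + 1))⟫
          + α * ‖y (j + 1) - y j‖ ^ 2 ≤
        ⟪F j, z - y j⟫ + ⟪q j + γ • g (y j), γ • g z⟫ + α * ‖z - y j‖ ^ 2)
    (i : ι) :
    γ * ∑ j ∈ Icc 1 N, g (y j) i ≤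
      (α * R ^ 2 + R + 3 / 2 * (γ * G) ^ 2) / (γ * ε) + 2 * (γ * G) := by
  have hG : 0 ≤ G := (norm_nonneg _).trans (hgbd z hz)
  have hR : 0 ≤ R := by simpa using hdiam z hz z hz
  have hα0 : 0 ≤ α := by nlinarith [sq_nonneg (γ * β)]
  have hnorm : ∀ j, 1 ≤ j → j ≤ N → ‖γ • g (y j)‖ ≤ γ * G := fun j hj hjN => by
    rw [norm_smul, Real.norm_of_nonneg hγ.le]
    exact mul_le_mul_of_nonneg_left (hgbd _ (hy j hj hjN)) hγ.le
  have hqnn : ∀ j ≤ N, ∀ i, 0 ≤ q j i := fun j hj i =>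
    nonneg_of_queue_update (by simp [hq0]) (fun j hj hjN => hq j hj hjN i) j hj
  rw [mul_sum]
  refine sum_le_of_queue_drift (by positivity) (by positivity) (by positivity) hq0 hq hnorm
    (fun j hj hjN => ?_) i
  have hx := hy j hj hjN.le
  have hx' := hy (j + 1) (by omega) hjN
  exact norm_sq_le_drift_of_linearized_min (hqnn j hjN.le)
    (by simpa only [Nat.add_sub_cancel] using hq (j + 1) (by omega) hjN) (hmin j hj hjN)
    (hF j hj hjN) (hdiam _ hz _ hx') (hdiam _ hz _ hx) hslater hε.le (hgbd _ hx) (hgbd _ hx')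
    (hgbd _ hz) (hlip _ hx' _ hx) hγ.le hα

end EuclideanSpace

theorem stmt5_general {n m : ℕ}
    (X₀ : Set (EuclideanSpace ℝ (Fin n)))
    (G₁ G₂ β γ ε α η : ℝ)
    (hdiam : ∀ x ∈ X₀, ∀ y ∈ X₀, ‖x - y‖ ≤ G₁)
    (T : ℕ)
    (fgrad : ℕ → EuclideanSpace ℝ (Fin n) → EuclideanSpace ℝ (Fin n))
    (hfgradbd : ∀ t ∈ Finset.Icc 1 T, ∀ x ∈ X₀, ‖fgrad t x‖ ≤ 1)
    (g : EuclideanSpace ℝ (Fin n) → EuclideanSpace ℝ (Fin m))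
    (hgbd : ∀ x ∈ X₀, ‖g x‖ ≤ G₂)
    (hglip : ∀ x ∈ X₀, ∀ y ∈ X₀, ‖g x - g y‖ ≤ β * ‖x - y‖)
    (hγ : 0 < γ) (hε : 0 < ε)
    (xhat : EuclideanSpace ℝ (Fin n)) (hxhat : xhat ∈ X₀)
    (hslater : ∀ i, g xhat i ≤ -ε)
    (hη : 0 < η) (hα : (1 / 2) * (γ ^ 2 * β ^ 2 + η) ≤ α)
    -- one window `W` of the partition, with slots enumerated in increasing
    -- order by `s : {1, …, |W|} → W`
    (W : Finset ℕ) (hW : W ⊆ Finset.Icc 1 T)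
    (s : ℕ → ℕ)
    (hsmono : StrictMonoOn s (Set.Icc 1 W.card))
    (hsimg : W = (Finset.Icc 1 W.card).image s)
    -- the virtual-queue algorithm run along the slots of `W` (queues reset to 0
    -- at the start of the window; `Q j` is the queue after position `j`)
    (x : ℕ → EuclideanSpace ℝ (Fin n))
    (Q : ℕ → Fin m → ℝ)
    (hx1 : x (s 1) ∈ X₀)
    (hQ0 : ∀ i, Q 0 i = 0)
    (hQ : ∀ j, 1 ≤ j → j ≤ W.card → ∀ i,
      Q j i = max (-(γ * g (x (s j)) i)) (Q (j - 1) i + γ * g (x (s j)) i))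
    (hxupd : ∀ j, 1 ≤ j → j + 1 ≤ W.card → x (s (j + 1)) ∈ X₀ ∧
      ∀ z ∈ X₀,
        ⟪fgrad (s j) (x (s j)), x (s (j + 1)) - x (s j)⟫
            + (∑ i, (Q j i + γ * g (x (s j)) i) * (γ * g (x (s (j + 1))) i))
            + α * ‖x (s (j + 1)) - x (s j)‖ ^ 2 ≤
          ⟪fgrad (s j) (x (s j)), z - x (s j)⟫
            + (∑ i, (Q j i + γ * g (x (s j)) i) * (γ * g z i))
            + α * ‖z - x (s j)‖ ^ 2)
    :
    ∀ i, ∑ t ∈ W, g (x t) i ≤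
      2 * G₂ + (α * G₁ ^ 2 + G₁) / (γ ^ 2 * ε) + 2 * G₂ ^ 2 / ε := by
  intro i
  set N := W.card
  set q : ℕ → EuclideanSpace ℝ (Fin m) := fun j => WithLp.toLp 2 (Q j)
  have hmem : ∀ j, 1 ≤ j → j ≤ N → x (s j) ∈ X₀
    | 1, _, _ => hx1
    | j + 2, _, hj => (hxupd (j + 1) (by omega) hj).1
  have hslot : ∀ j, 1 ≤ j → j ≤ N → s j ∈ Icc 1 T := fun j hj hjN =>
    hW (hsimg ▸ mem_image_of_mem s (mem_Icc.2 ⟨hj, hjN⟩))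
  have hinner : ∀ j y, ∑ i, (Q j i + γ * g (x (s j)) i) * (γ * g y i) =
      ⟪q j + γ • g (x (s j)), γ • g y⟫ :=
    fun j y => by simp [EuclideanSpace.real_inner_eq_sum_mul, q]
  have hαβ : (γ * β) ^ 2 ≤ 2 * α := by nlinarith
  have hγsum := sum_le_of_virtual_queue_run (y := fun j => x (s j))
    (F := fun j => fgrad (s j) (x (s j))) (q := q) hγ hε hαβ hdiam hgbd hglip hxhat hslater
    hmem (fun j hj hjN => hfgradbd _ (hslot j hj hjN.le) _ (hmem j hj hjN.le))
    (by ext i; simp [q, hQ0]) (by simpa [q] using hQ)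
    (fun j hj hjN => by simpa only [hinner] using (hxupd j hj hjN).2 xhat hxhat) i
  rw [hsimg, sum_image (by rw [coe_Icc]; exact hsmono.injOn)]
  have hbound : (α * G₁ ^ 2 + G₁ + 3 / 2 * (γ * G₂) ^ 2) / (γ * ε) + 2 * (γ * G₂) =
      γ * (2 * G₂ + (α * G₁ ^ 2 + G₁) / (γ ^ 2 * ε) + 3 / 2 * G₂ ^ 2 / ε) := by
    field_simp
    ring
  have hslack : 3 / 2 * G₂ ^ 2 / ε ≤ 2 * G₂ ^ 2 / ε := by gcongr; norm_num
  linarith [le_of_mul_le_mul_left (hγsum.trans hbound.le) hγ]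

/-- Per-window constraint violation bound (key step in the proof of Theorem 1):
fix one window `W` of the partition, with slots listed in increasing order as
`s 1 < s 2 < … < s |W|`. If `α ≥ (1/2)(γ²β² + η)`, then for every constraint
index `i` the iterates of the virtual-queue algorithm run along the slots of `W`
satisfy `Σ_{t ∈ W} g_i(x(t)) ≤ 2G₂ + (αG₁² + G₁)/(γ²ε) + 2G₂²/ε`; in particular
this bound does not depend on the window length `|W|`. -/
theorem stmt5 {n m : ℕ}
    (X₀ : Set (EuclideanSpace ℝ (Fin n))) (hne : X₀.Nonempty)
    (hcomp : IsCompact X₀) (hconv : Convex ℝ X₀)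
    (G₁ G₂ β γ ε α η : ℝ) (hG₁ : 0 < G₁)
    (hdiam : ∀ x ∈ X₀, ∀ y ∈ X₀, ‖x - y‖ ≤ G₁)
    (T : ℕ) (hT : 1 ≤ T)
    (f : ℕ → EuclideanSpace ℝ (Fin n) → ℝ)
    (fgrad : ℕ → EuclideanSpace ℝ (Fin n) → EuclideanSpace ℝ (Fin n))
    (hfconv : ∀ t ∈ Finset.Icc 1 T, ConvexOn ℝ Set.univ (f t))
    (hfgrad : ∀ t ∈ Finset.Icc 1 T, ∀ x, HasGradientAt (f t) (fgrad t x) x)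
    (hfgradbd : ∀ t ∈ Finset.Icc 1 T, ∀ x ∈ X₀, ‖fgrad t x‖ ≤ 1)
    (g : EuclideanSpace ℝ (Fin n) → EuclideanSpace ℝ (Fin m))
    (hgconv : ∀ i, ConvexOn ℝ Set.univ (fun x => g x i))
    (hgbd : ∀ x ∈ X₀, ‖g x‖ ≤ G₂)
    (hglip : ∀ x ∈ X₀, ∀ y ∈ X₀, ‖g x - g y‖ ≤ β * ‖x - y‖)
    (hγ : 0 < γ) (hε : 0 < ε)
    (xhat : EuclideanSpace ℝ (Fin n)) (hxhat : xhat ∈ X₀)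
    (hslater : ∀ i, g xhat i ≤ -ε)
    (hη : 0 < η) (hα : (1 / 2) * (γ ^ 2 * β ^ 2 + η) ≤ α)
    -- one window `W` of the partition, with slots enumerated in increasing
    -- order by `s : {1, …, |W|} → W`
    (W : Finset ℕ) (hW : W ⊆ Finset.Icc 1 T) (hWne : W.Nonempty)
    (s : ℕ → ℕ)
    (hsmono : StrictMonoOn s (Set.Icc 1 W.card))
    (hsimg : W = (Finset.Icc 1 W.card).image s)
    -- the virtual-queue algorithm run along the slots of `W` (queues reset to 0
    -- at the start of the window; `Q j` is the queue after position `j`)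
    (x : ℕ → EuclideanSpace ℝ (Fin n))
    (Q : ℕ → Fin m → ℝ)
    (hx1 : x (s 1) ∈ X₀)
    (hQ0 : ∀ i, Q 0 i = 0)
    (hQ : ∀ j, 1 ≤ j → j ≤ W.card → ∀ i,
      Q j i = max (-(γ * g (x (s j)) i)) (Q (j - 1) i + γ * g (x (s j)) i))
    (hxupd : ∀ j, 1 ≤ j → j + 1 ≤ W.card → x (s (j + 1)) ∈ X₀ ∧
      ∀ z ∈ X₀,
        ⟪fgrad (s j) (x (s j)), x (s (j + 1)) - x (s j)⟫
            + (∑ i, (Q j i + γ * g (x (s j)) i) * (γ * g (x (s (j + 1))) i))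
            + α * ‖x (s (j + 1)) - x (s j)‖ ^ 2 ≤
          ⟪fgrad (s j) (x (s j)), z - x (s j)⟫
            + (∑ i, (Q j i + γ * g (x (s j)) i) * (γ * g z i))
            + α * ‖z - x (s j)‖ ^ 2)
    :
    ∀ i, ∑ t ∈ W, g (x t) i ≤
      2 * G₂ + (α * G₁ ^ 2 + G₁) / (γ ^ 2 * ε) + 2 * G₂ ^ 2 / ε :=
  stmt5_general X₀ G₁ G₂ β γ ε α η hdiam T fgrad hfgradbd g hgbd hglip hγ hε xhat hxhat hslater hη
    hα W hW s hsmono hsimg x Q hx1 hQ0 hQ hxupd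
end
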